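/- arXiv:1309.7096 — 7 statements merged into one kernel-verified Lean document; each statement's English description precedes it below -/
import Mathlib

section
/- Let a, a′ : ℕ → ℝ and b : ℕ → ℝ be sequences of positive numbers with s := ∑_{k=0}^∞ 1/a(k) < ∞ and t := ∑_{i=0}^∞ a′(i)/b(i)² < ∞, let c : ℕ → ℝ and κ > 0 satisfy κ ≤ ∏_{j=M}^{N} c(j) ≤ 1/κ for all natural numbers M ≤ N, and let g : ℕ → ℂ satisfy ∑_{i=0}^∞ |g(i)|²/a′(i) < ∞. Define f(k) := ∑_{i=0}^{k} (1/b(i))·(∏_{j=i}^{k−1} c(j))·g(i). Then b(0)f(0) = g(0), b(k)(f(k) − c(k−1)f(k−1)) = g(k) for all k ≥ 1, and ∑_{k=0}^∞ |f(k)|²/a(k) ≤ (s·t/κ²)·∑_{i=0}^∞ |g(i)|²/a′(i); in particular f ∈ ℓ²_a. -/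
open Finset

/-- the explicit solution `f` of the Jacobi type equation `Af = g`
(with the convention `f(-1) = 0`), together with the weighted `ℓ²` estimate
`‖f‖²_a ≤ (s·t/κ²)·‖g‖²_{a′}`. -/
theorem jacobi_A_solution (a a' b c : ℕ → ℝ) (κ : ℝ) (g : ℕ → ℂ)
    (ha : ∀ k, 0 < a k) (ha' : ∀ k, 0 < a' k) (hb : ∀ k, 0 < b k)
    (hs : Summable fun k => 1 / a k)
    (ht : Summable fun i => a' i / (b i)^2)
    (hκ : 0 < κ)
    (hc : ∀ M N : ℕ, M ≤ N →
      κ ≤ ∏ j ∈ Finset.Icc M N, c j ∧ ∏ j ∈ Finset.Icc M N, c j ≤ 1 / κ)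
    (hg : Summable fun i => ‖g i‖^2 / a' i)
    (f : ℕ → ℂ)
    (hf : ∀ k, f k = ∑ i ∈ Finset.range (k+1),
      (1 / (b i : ℂ)) * (∏ j ∈ Finset.Ico i k, (c j : ℂ)) * g i) :
    (b 0 : ℂ) * f 0 = g 0 ∧
    (∀ k, 1 ≤ k → (b k : ℂ) * (f k - (c (k-1) : ℂ) * f (k-1)) = g k) ∧
    Summable (fun k => ‖f k‖^2 / a k) ∧
    ∑' k, ‖f k‖^2 / a k ≤
      ((∑' k, 1 / a k) * (∑' i, a' i / (b i)^2) / κ^2) * ∑' i, ‖g i‖^2 / a' i := by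
  have hκ1 : κ ≤ 1 := by
    obtain ⟨h1, h2⟩ := hc 0 0 le_rfl
    simp only [Finset.Icc_self, Finset.prod_singleton] at h1 h2
    have h3 : κ * κ ≤ 1 := (le_div_iff₀ hκ).mp (h1.trans h2)
    nlinarith
  have hprodR : ∀ i k : ℕ, (0 : ℝ) < (∏ j ∈ Finset.Ico i k, c j) ∧
      (∏ j ∈ Finset.Ico i k, c j) ≤ 1/κ := by
    intro i k
    rcases lt_or_ge i k with h | h
    · have hk : k - 1 + 1 = k := by omega
      have h' := hc i (k-1) (by omega)
      rw [← hk, Finset.Ico_add_one_right_eq_Icc]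
      exact ⟨lt_of_lt_of_le hκ h'.1, h'.2⟩
    · rw [Finset.Ico_eq_empty (by omega)]
      simp only [Finset.prod_empty]
      refine ⟨one_pos, ?_⟩
      rw [le_div_iff₀ hκ, one_mul]; exact hκ1
  -- Part 1
  have hb0 : (b 0 : ℂ) ≠ 0 := by
    exact_mod_cast (hb 0).ne'
  have part1 : (b 0 : ℂ) * f 0 = g 0 := by
    rw [hf 0]
    simp only [zero_add, Finset.sum_range_one, Finset.Ico_self, Finset.prod_empty, mul_one, one_mul]
    field_simp
  -- Part 2
  have part2 : ∀ k, 1 ≤ k → (b k : ℂ) * (f k - (c (k-1) : ℂ) * f (k-1)) = g k := by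
    intro k hk
    have hk1 : k - 1 + 1 = k := by omega
    have hbk : (b k : ℂ) ≠ 0 := by exact_mod_cast (hb k).ne'
    have h1 : (c (k-1) : ℂ) * f (k-1) = ∑ i ∈ Finset.range k,
        (1 / (b i : ℂ)) * (∏ j ∈ Finset.Ico i k, (c j : ℂ)) * g i := by
      rw [hf (k-1), hk1, Finset.mul_sum]
      refine Finset.sum_congr rfl fun i hi => ?_
      have hi' : i ≤ k - 1 := by
        simp only [Finset.mem_range] at hi; omega
      rw [show (Finset.Ico i k) = Finset.Ico i ((k-1)+1) by rw [hk1],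
        Finset.prod_Ico_succ_top hi']
      ring
    have h2 : f k = (∑ i ∈ Finset.range k,
        (1 / (b i : ℂ)) * (∏ j ∈ Finset.Ico i k, (c j : ℂ)) * g i)
        + (1 / (b k : ℂ)) * g k := by
      rw [hf k, Finset.sum_range_succ]
      simp
    rw [h2, h1]
    field_simp
    ring
  -- norms of products
  have hnormprod : ∀ i k : ℕ, ‖∏ j ∈ Finset.Ico i k, (c j : ℂ)‖ ≤ 1 / κ := by
    intro i k
    have : (∏ j ∈ Finset.Ico i k, (c j : ℂ)) = ((∏ j ∈ Finset.Ico i k, c j : ℝ) : ℂ) := by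
      push_cast; rfl
    rw [this, Complex.norm_real, Real.norm_eq_abs,
      abs_of_pos (hprodR i k).1]
    exact (hprodR i k).2
  set G := ∑' i, ‖g i‖^2 / a' i with hGdef
  set T := ∑' i, a' i / (b i)^2 with hTdef
  have hG0 : 0 ≤ G := tsum_nonneg fun i => div_nonneg (sq_nonneg _) (ha' i).le
  have hT0 : 0 ≤ T := tsum_nonneg fun i => div_nonneg (ha' i).le (sq_nonneg _)
  have key : ∀ k, ‖f k‖ ≤ (1/κ) * ∑ i ∈ Finset.range (k+1), ‖g i‖ / b i := by
    intro k
    rw [hf k]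
    calc ‖∑ i ∈ Finset.range (k+1),
        (1 / (b i : ℂ)) * (∏ j ∈ Finset.Ico i k, (c j : ℂ)) * g i‖
        ≤ ∑ i ∈ Finset.range (k+1),
          ‖(1 / (b i : ℂ)) * (∏ j ∈ Finset.Ico i k, (c j : ℂ)) * g i‖ :=
        norm_sum_le _ _
      _ ≤ ∑ i ∈ Finset.range (k+1), (1/κ) * (‖g i‖ / b i) := by
        refine Finset.sum_le_sum fun i _ => ?_
        rw [norm_mul, norm_mul]
        have hn1 : ‖(1 / (b i : ℂ))‖ = 1 / b i := by
          rw [norm_div, norm_one, Complex.norm_real, Real.norm_eq_abs,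
            abs_of_pos (hb i)]
        rw [hn1]
        have hbi : (0:ℝ) < 1 / b i := one_div_pos.mpr (hb i)
        have := hnormprod i k
        have hgn : (0:ℝ) ≤ ‖g i‖ := norm_nonneg _
        have hpn : (0:ℝ) ≤ ‖∏ j ∈ Finset.Ico i k, (c j : ℂ)‖ := norm_nonneg _
        calc 1 / b i * ‖∏ j ∈ Finset.Ico i k, (c j : ℂ)‖ * ‖g i‖
            ≤ 1 / b i * (1/κ) * ‖g i‖ := by
              apply mul_le_mul_of_nonneg_right _ hgn
              exact mul_le_mul_of_nonneg_left this hbi.le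
          _ = (1/κ) * (‖g i‖ / b i) := by
              field_simp
      _ = (1/κ) * ∑ i ∈ Finset.range (k+1), ‖g i‖ / b i := by
        rw [Finset.mul_sum]
  have hCS : ∀ k, (∑ i ∈ Finset.range (k+1), ‖g i‖ / b i)^2 ≤ G * T := by
    intro k
    have h1 := Finset.sum_mul_sq_le_sq_mul_sq (Finset.range (k+1))
      (fun i => ‖g i‖ / Real.sqrt (a' i)) (fun i => Real.sqrt (a' i) / b i)
    have e1 : ∀ i, (‖g i‖ / Real.sqrt (a' i)) * (Real.sqrt (a' i) / b i) = ‖g i‖ / b i := by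
      intro i
      have hs' : Real.sqrt (a' i) ≠ 0 := (Real.sqrt_pos.mpr (ha' i)).ne'
      have hb' : b i ≠ 0 := (hb i).ne'
      field_simp
    have e2 : ∀ i, (‖g i‖ / Real.sqrt (a' i))^2 = ‖g i‖^2 / a' i := by
      intro i
      rw [div_pow, Real.sq_sqrt (ha' i).le]
    have e3 : ∀ i, (Real.sqrt (a' i) / b i)^2 = a' i / (b i)^2 := by
      intro i
      rw [div_pow, Real.sq_sqrt (ha' i).le]
    simp only [e1, e2, e3] at h1
    have hle1 : ∑ i ∈ Finset.range (k+1), ‖g i‖^2 / a' i ≤ G :=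
      Summable.sum_le_tsum _ (fun i _ => div_nonneg (sq_nonneg _) (ha' i).le) hg
    have hle2 : ∑ i ∈ Finset.range (k+1), a' i / (b i)^2 ≤ T :=
      Summable.sum_le_tsum _ (fun i _ => div_nonneg (ha' i).le (sq_nonneg _)) ht
    calc (∑ i ∈ Finset.range (k+1), ‖g i‖ / b i)^2
        ≤ (∑ i ∈ Finset.range (k+1), ‖g i‖^2 / a' i) *
          ∑ i ∈ Finset.range (k+1), a' i / (b i)^2 := h1
      _ ≤ G * T := by
          apply mul_le_mul hle1 hle2 (Finset.sum_nonneg fun i _ => div_nonneg (ha' i).le (sq_nonneg _)) hG0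
  have hfb : ∀ k, ‖f k‖^2 ≤ G * T / κ^2 := by
    intro k
    have h1 : ‖f k‖^2 ≤ ((1/κ) * ∑ i ∈ Finset.range (k+1), ‖g i‖ / b i)^2 :=
      pow_le_pow_left₀ (norm_nonneg _) (key k) 2
    have h2 : ((1/κ) * ∑ i ∈ Finset.range (k+1), ‖g i‖ / b i)^2
        = (∑ i ∈ Finset.range (k+1), ‖g i‖ / b i)^2 / κ^2 := by
      field_simp
    rw [h2] at h1
    refine h1.trans ?_
    exact div_le_div₀ (mul_nonneg hG0 hT0) (hCS k) (by positivity) le_rfl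
  have hbound : ∀ k, ‖f k‖^2 / a k ≤ (G * T / κ^2) * (1 / a k) := by
    intro k
    rw [mul_one_div]
    exact div_le_div₀ (by positivity) (hfb k) (ha k) le_rfl
  have hsum : Summable (fun k => ‖f k‖^2 / a k) := by
    apply Summable.of_nonneg_of_le (fun k => div_nonneg (sq_nonneg _) (ha k).le) hbound
    exact hs.mul_left _
  refine ⟨part1, part2, hsum, ?_⟩
  calc ∑' k, ‖f k‖^2 / a k ≤ ∑' k, (G * T / κ^2) * (1 / a k) :=
        Summable.tsum_le_tsum hbound hsum (hs.mul_left _)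
    _ = (G * T / κ^2) * ∑' k, 1 / a k := tsum_mul_left
    _ = ((∑' k, 1 / a k) * T / κ^2) * G := by ring
end

section
/- Let a, a′ : ℕ → ℝ and b : ℕ → ℝ be sequences of positive numbers with s := ∑_{k=0}^∞ 1/a(k) < ∞ and t := ∑_{i=0}^∞ a′(i)/b(i)² < ∞, let c : ℕ → ℝ and κ > 0 satisfy κ ≤ ∏_{j=M}^{N} c(j) ≤ 1/κ for all natural numbers M ≤ N, let g : ℕ → ℂ satisfy ∑_{i=0}^∞ |g(i)|²/a′(i) < ∞, and let α ∈ ℂ. Then for every k the series ∑_{i=k}^∞ (1/b(i))·(∏_{j=k}^{i−1} c(j))·g(i) converges absolutely, and the function f(k) := (∏_{i=0}^{k−1} 1/c(i))·α − ∑_{i=k}^∞ (1/b(i))·(∏_{j=k}^{i−1} c(j))·g(i) satisfies b(k)(f(k) − c(k)f(k+1)) = −g(k) for all k ≥ 0 and ∑_{k=0}^∞ |f(k)|²/a(k) < ∞, i.e. f ∈ ℓ²_a. -/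
/-!
The partial products of `c` stay in `[κ, κ⁻¹]`, so the `i`-th term of the `k`-th tail series is
at most `κ⁻¹ ‖g i‖ / b i`, uniformly in `k`; and `‖g i‖ / b i` is summable because, by AM-GM,
`2 ‖g i‖ / b i ≤ ‖g i‖² / a' i + a' i / b i²`. Peeling off the first term of the `k`-th tail `S k`
gives `S k = g k / b k + c k S (k + 1)`, which is the difference equation. Finally `f` is bounded,
so `‖f k‖² / a k ≤ B² / a k` is summable.
-/

open Finset

def ProdIccBounded (c : ℕ → ℝ) (κ : ℝ) : Prop :=
  ∀ M N : ℕ, M ≤ N → κ ≤ ∏ j ∈ Icc M N, c j ∧ ∏ j ∈ Icc M N, c j ≤ 1 / κ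

namespace ProdIccBounded

variable {c : ℕ → ℝ} {κ : ℝ}

theorem le_one (hκ : 0 < κ) (hc : ProdIccBounded c κ) : κ ≤ 1 := by
  obtain ⟨h₁, h₂⟩ := hc 0 0 le_rfl
  have : κ * κ ≤ 1 := (le_div_iff₀ hκ).1 (h₁.trans h₂)
  nlinarith

theorem prod_Ico_mem (hκ : 0 < κ) (hc : ProdIccBounded c κ) {k i : ℕ} (hki : k ≤ i) :
    κ ≤ ∏ j ∈ Ico k i, c j ∧ ∏ j ∈ Ico k i, c j ≤ κ⁻¹ := by
  rcases hki.eq_or_lt with rfl | hlt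
  · have hκ₁ := hc.le_one hκ
    simpa using ⟨hκ₁, one_le_inv₀ hκ |>.2 hκ₁⟩
  · obtain ⟨m, rfl⟩ := Nat.exists_eq_add_of_lt hlt
    rw [Ico_add_one_right_eq_Icc, ← one_div]
    exact hc k (k + m) (by omega)

theorem pos (hκ : 0 < κ) (hc : ProdIccBounded c κ) (j : ℕ) : 0 < c j := by
  simpa using hκ.trans_le (hc.prod_Ico_mem hκ (Nat.le_succ j)).1

theorem norm_prod_range_inv_le (hκ : 0 < κ) (hc : ProdIccBounded c κ) (k : ℕ) :
    ‖∏ i ∈ range k, ((c i : ℂ))⁻¹‖ ≤ κ⁻¹ := by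
  have hκP : κ ≤ ∏ i ∈ range k, c i := range_eq_Ico k ▸ (hc.prod_Ico_mem hκ (Nat.zero_le k)).1
  rw [prod_inv_distrib, norm_inv, ← Complex.ofReal_prod, Complex.norm_real,
    Real.norm_of_nonneg (hκ.le.trans hκP)]
  exact inv_anti₀ hκ hκP

end ProdIccBounded

theorem div_le_half_add_sq_div (x : ℝ) {p q : ℝ} (hp : 0 < p) (hq : q ≠ 0) :
    x / q ≤ (x ^ 2 / p + p / q ^ 2) / 2 := by
  have key : (x ^ 2 / p + p / q ^ 2) / 2 - x / q = (x * q - p) ^ 2 / (2 * p * q ^ 2) := by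
    field_simp
    ring
  have : 0 ≤ (x * q - p) ^ 2 / (2 * p * q ^ 2) := by positivity
  linarith

theorem summable_div_of_summable_sq_div {ι : Type*} {x p q : ι → ℝ} (hx : ∀ i, 0 ≤ x i)
    (hp : ∀ i, 0 < p i) (hq : ∀ i, 0 < q i) (hxp : Summable fun i => x i ^ 2 / p i)
    (hpq : Summable fun i => p i / q i ^ 2) : Summable fun i => x i / q i :=
  .of_nonneg_of_le (fun i => div_nonneg (hx i) (hq i).le)
    (fun i => div_le_half_add_sq_div (x i) (hp i) (hq i).ne') ((hxp.add hpq).div_const 2)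

theorem summable_norm_sq_div_of_norm_le {ι E : Type*} [SeminormedAddCommGroup E] {u : ι → E}
    {a : ι → ℝ} {B : ℝ} (hu : ∀ i, ‖u i‖ ≤ B) (ha : Summable fun i => 1 / a i) :
    Summable fun i => ‖u i‖ ^ 2 / a i := by
  refine .of_norm_bounded (ha.abs.mul_left (B ^ 2)) fun i => ?_
  rw [Real.norm_eq_abs, abs_div, abs_of_nonneg (sq_nonneg _), abs_one_div, ← div_eq_mul_one_div]
  gcongr
  exact hu i

noncomputable def tailTerm (b c : ℕ → ℝ) (g : ℕ → ℂ) (k i : ℕ) : ℂ :=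
  if k ≤ i then (1 / (b i : ℂ)) * (∏ j ∈ Ico k i, (c j : ℂ)) * g i else 0

section tailTerm

variable {b c : ℕ → ℝ} {κ : ℝ} {g : ℕ → ℂ}

theorem tailTerm_eq_ite_add (k i : ℕ) :
    tailTerm b c g k i =
      (if i = k then 1 / (b k : ℂ) * g k else 0) + c k * tailTerm b c g (k + 1) i := by
  unfold tailTerm
  rcases lt_trichotomy i k with hik | rfl | hki
  · simp [hik.not_ge, hik.ne, (hik.trans (Nat.lt_succ_self k)).not_ge]
  · simp
  · simp only [hki.le, if_true, hki.ne', if_false, Nat.succ_le_of_lt hki, zero_add,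
      prod_eq_prod_Ico_succ_bot hki]
    ring

theorem norm_tailTerm_le (hb : ∀ i, 0 < b i) (hκ : 0 < κ) (hc : ProdIccBounded c κ) (k i : ℕ) :
    ‖tailTerm b c g k i‖ ≤ κ⁻¹ * (‖g i‖ / b i) := by
  unfold tailTerm
  split_ifs with hki
  · obtain ⟨hlow, hup⟩ := hc.prod_Ico_mem hκ hki
    rw [norm_mul, norm_mul, norm_div, norm_one, Complex.norm_real, ← Complex.ofReal_prod,
      Complex.norm_real, Real.norm_of_nonneg (hb i).le, Real.norm_of_nonneg (hκ.le.trans hlow)]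
    calc 1 / b i * (∏ j ∈ Ico k i, c j) * ‖g i‖ ≤ 1 / b i * κ⁻¹ * ‖g i‖ := by
          have := hb i
          gcongr
      _ = κ⁻¹ * (‖g i‖ / b i) := by ring
  · rw [norm_zero]
    have := hb i
    positivity

theorem summable_norm_tailTerm (hb : ∀ i, 0 < b i) (hκ : 0 < κ) (hc : ProdIccBounded c κ)
    (hgb : Summable fun i => ‖g i‖ / b i) (k : ℕ) :
    Summable fun i => ‖tailTerm b c g k i‖ :=
  .of_nonneg_of_le (fun _ => norm_nonneg _) (norm_tailTerm_le hb hκ hc k) (hgb.mul_left κ⁻¹)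

theorem norm_tsum_tailTerm_le (hb : ∀ i, 0 < b i) (hκ : 0 < κ) (hc : ProdIccBounded c κ)
    (hgb : Summable fun i => ‖g i‖ / b i) (k : ℕ) :
    ‖∑' i, tailTerm b c g k i‖ ≤ κ⁻¹ * ∑' i, ‖g i‖ / b i :=
  calc ‖∑' i, tailTerm b c g k i‖ ≤ ∑' i, ‖tailTerm b c g k i‖ :=
        norm_tsum_le_tsum_norm (summable_norm_tailTerm hb hκ hc hgb k)
    _ ≤ ∑' i, κ⁻¹ * (‖g i‖ / b i) :=
        (summable_norm_tailTerm hb hκ hc hgb k).tsum_le_tsum (norm_tailTerm_le hb hκ hc k)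
          (hgb.mul_left κ⁻¹)
    _ = κ⁻¹ * ∑' i, ‖g i‖ / b i := tsum_mul_left

theorem tsum_tailTerm_eq {k : ℕ} (hsum : Summable (tailTerm b c g (k + 1))) :
    ∑' i, tailTerm b c g k i = 1 / (b k : ℂ) * g k + c k * ∑' i, tailTerm b c g (k + 1) i := by
  rw [tsum_congr (tailTerm_eq_ite_add k), (hasSum_ite_eq k _).summable.tsum_add
    (hsum.mul_left _), tsum_ite_eq, tsum_mul_left]

end tailTerm

theorem jacobi_Abar_solution_general (a a' b c : ℕ → ℝ) (κ : ℝ) (g : ℕ → ℂ) (α : ℂ)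
    (ha' : ∀ k, 0 < a' k) (hb : ∀ k, 0 < b k)
    (hs : Summable fun k => 1 / a k)
    (ht : Summable fun i => a' i / (b i)^2)
    (hκ : 0 < κ)
    (hc : ∀ M N : ℕ, M ≤ N →
      κ ≤ ∏ j ∈ Finset.Icc M N, c j ∧ ∏ j ∈ Finset.Icc M N, c j ≤ 1 / κ)
    (hg : Summable fun i => ‖g i‖^2 / a' i)
    (f : ℕ → ℂ)
    (hf : ∀ k, f k = (∏ i ∈ Finset.range k, ((c i : ℂ))⁻¹) * α -
      ∑' i : ℕ, if k ≤ i then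
        (1 / (b i : ℂ)) * (∏ j ∈ Finset.Ico k i, (c j : ℂ)) * g i else 0) :
    (∀ k, Summable fun i : ℕ => ‖if k ≤ i then
        (1 / (b i : ℂ)) * (∏ j ∈ Finset.Ico k i, (c j : ℂ)) * g i else 0‖) ∧
    (∀ k, (b k : ℂ) * (f k - (c k : ℂ) * f (k+1)) = -g k) ∧
    Summable (fun k => ‖f k‖^2 / a k) := by
  have hc : ProdIccBounded c κ := hc
  have hf : ∀ k, f k = (∏ i ∈ range k, ((c i : ℂ))⁻¹) * α - ∑' i, tailTerm b c g k i := hf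
  have hgb : Summable fun i => ‖g i‖ / b i :=
    summable_div_of_summable_sq_div (fun _ => norm_nonneg _) ha' hb hg ht
  refine ⟨summable_norm_tailTerm hb hκ hc hgb, fun k => ?_, ?_⟩
  · have hbk : (b k : ℂ) ≠ 0 := Complex.ofReal_ne_zero.2 (hb k).ne'
    have hck : (c k : ℂ) ≠ 0 := Complex.ofReal_ne_zero.2 (hc.pos hκ k).ne'
    rw [hf, hf, tsum_tailTerm_eq (summable_norm_tailTerm hb hκ hc hgb (k + 1)).of_norm,
      prod_range_succ]
    field_simp
    ring
  · refine summable_norm_sq_div_of_norm_le (B := κ⁻¹ * ‖α‖ + κ⁻¹ * ∑' i, ‖g i‖ / b i)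
      (fun k => ?_) hs
    rw [hf]
    calc _ ≤ ‖∏ i ∈ range k, ((c i : ℂ))⁻¹‖ * ‖α‖ + ‖∑' i, tailTerm b c g k i‖ :=
          (norm_sub_le _ _).trans_eq (by rw [norm_mul])
      _ ≤ _ := by
          gcongr
          · exact hc.norm_prod_range_inv_le hκ k
          · exact norm_tsum_tailTerm_le hb hκ hc hgb k

/-- the general solution `f` of the Jacobi type equation `Āf = -g`:
the tail series converges absolutely for every `k`, `f` solves the difference
equation, and `f` lies in the weighted space `ℓ²_a`. -/
theorem jacobi_Abar_solution (a a' b c : ℕ → ℝ) (κ : ℝ) (g : ℕ → ℂ) (α : ℂ)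
    (ha : ∀ k, 0 < a k) (ha' : ∀ k, 0 < a' k) (hb : ∀ k, 0 < b k)
    (hs : Summable fun k => 1 / a k)
    (ht : Summable fun i => a' i / (b i)^2)
    (hκ : 0 < κ)
    (hc : ∀ M N : ℕ, M ≤ N →
      κ ≤ ∏ j ∈ Finset.Icc M N, c j ∧ ∏ j ∈ Finset.Icc M N, c j ≤ 1 / κ)
    (hg : Summable fun i => ‖g i‖^2 / a' i)
    (f : ℕ → ℂ)
    (hf : ∀ k, f k = (∏ i ∈ Finset.range k, ((c i : ℂ))⁻¹) * α -
      ∑' i : ℕ, if k ≤ i then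
        (1 / (b i : ℂ)) * (∏ j ∈ Finset.Ico k i, (c j : ℂ)) * g i else 0) :
    (∀ k, Summable fun i : ℕ => ‖if k ≤ i then
        (1 / (b i : ℂ)) * (∏ j ∈ Finset.Ico k i, (c j : ℂ)) * g i else 0‖) ∧
    (∀ k, (b k : ℂ) * (f k - (c k : ℂ) * f (k+1)) = -g k) ∧
    Summable (fun k => ‖f k‖^2 / a k) :=
  jacobi_Abar_solution_general a a' b c κ g α ha' hb hs ht hκ hc hg f hf
end

section
/- Let a′ : ℕ → ℝ and b : ℕ → ℝ be sequences of positive numbers with ∑_{i=0}^∞ a′(i)/b(i)² < ∞, let c : ℕ → ℝ and κ > 0 satisfy κ ≤ ∏_{j=M}^{N} c(j) ≤ 1/κ for all natural numbers M ≤ N, and assume that for every i the infinite product P(i) := lim_{N→∞} ∏_{j=i}^{N} c(j) exists. Let g : ℕ → ℂ satisfy ∑_{i=0}^∞ |g(i)|²/a′(i) < ∞, and suppose f : ℕ → ℂ satisfies b(0)f(0) = g(0) and b(k)(f(k) − c(k−1)f(k−1)) = g(k) for all k ≥ 1. Then the series ∑_{i=0}^∞ (1/b(i))·P(i)·g(i)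 converges absolutely and lim_{k→∞} f(k) exists and equals ∑_{i=0}^∞ (1/b(i))·P(i)·g(i). -/
/-!
Writing `P(i) = ∏_{j ≥ i} c(j)`, the tail products satisfy `P(k) = c(k) P(k+1)`, so the recursion
`f(k+1) = c(k) f(k) + g(k+1)/b(k+1)` telescopes to `P(k) f(k) = ∑_{i ≤ k} P(i) g(i)/b(i)`.
Since `P(k) = P(0) / ∏_{j < k} c(j) → 1`, the limit of `f` is the full series, which converges
absolutely by `|g|/b ≤ (|g|²/a′ + a′/b²)/2` and the bound `P ≤ 1/κ`.
-/

open Finset Filter Topology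

theorem div_le_half_sq_div_add_div_sq {a b x : ℝ} (ha : 0 < a) (hb : 0 < b) :
    x / b ≤ (x ^ 2 / a + a / b ^ 2) / 2 := by
  rw [div_add_div _ _ ha.ne' (by positivity), div_div, div_le_div_iff₀ hb (by positivity)]
  nlinarith [mul_nonneg hb.le (sq_nonneg (x * b - a))]

theorem summable_div_of_summable_sq_div_s6 {ι : Type*} {a b x : ι → ℝ} (ha : ∀ i, 0 < a i)
    (hb : ∀ i, 0 < b i) (hx : ∀ i, 0 ≤ x i) (hxa : Summable fun i => x i ^ 2 / a i)
    (hab : Summable fun i => a i / b i ^ 2) : Summable fun i => x i / b i :=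
  ((hxa.add hab).div_const 2).of_nonneg_of_le (fun i => div_nonneg (hx i) (hb i).le)
    fun i => div_le_half_sq_div_add_div_sq (ha i) (hb i)

theorem eq_mul_of_tendsto_prod_Icc {M : Type*} [CommMonoid M] [TopologicalSpace M]
    [ContinuousMul M] [T2Space M] {c : ℕ → M} {p q : M} {i : ℕ}
    (hp : Tendsto (fun N => ∏ j ∈ Icc i N, c j) atTop (𝓝 p))
    (hq : Tendsto (fun N => ∏ j ∈ Icc (i + 1) N, c j) atTop (𝓝 q)) : p = c i * q := by
  refine tendsto_nhds_unique hp ((hq.const_mul (c i)).congr' ?_)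
  filter_upwards [eventually_ge_atTop i] with N hN
  rw [Icc_add_one_left_eq_Ioc, mul_prod_Ioc_eq_prod_Icc hN]

theorem eq_prod_range_mul_of_eq_mul_succ {M : Type*} [CommMonoid M] {c P : ℕ → M}
    (h : ∀ k, P k = c k * P (k + 1)) (k : ℕ) : P 0 = (∏ j ∈ range k, c j) * P k := by
  induction k with
  | zero => simp
  | succ k ih => rw [ih, h k, prod_range_succ, mul_assoc]

theorem tendsto_one_of_eq_prod_range_mul {K : Type*} [NormedField K] {c P : ℕ → K}
    (hP : ∀ k, P 0 = (∏ j ∈ range k, c j) * P k)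
    (hlim : Tendsto (fun k => ∏ j ∈ range k, c j) atTop (𝓝 (P 0))) (h0 : P 0 ≠ 0) :
    Tendsto P atTop (𝓝 1) := by
  have hdiv : Tendsto (fun k => P 0 / ∏ j ∈ range k, c j) atTop (𝓝 1) :=
    div_self h0 ▸ tendsto_const_nhds.div hlim h0
  refine hdiv.congr' ?_
  filter_upwards [hlim.eventually_ne h0] with k hk
  rw [hP k, mul_div_cancel_left₀ _ hk]

theorem mul_eq_sum_range_of_recurrence {R : Type*} [CommSemiring R] {c P f h : ℕ → R}
    (hP : ∀ k, P k = c k * P (k + 1)) (hf0 : f 0 = h 0)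
    (hf : ∀ k, f (k + 1) = c k * f k + h (k + 1)) (k : ℕ) :
    P k * f k = ∑ i ∈ range (k + 1), P i * h i := by
  induction k with
  | zero => simp [hf0]
  | succ k ih => rw [sum_range_succ, ← ih, hf, hP k]; ring

theorem summable_norm_one_div_mul_mul {ι : Type*} {a b p : ι → ℝ} {g : ι → ℂ} {C : ℝ}
    (ha : ∀ i, 0 < a i) (hb : ∀ i, 0 < b i) (hp : ∀ i, |p i| ≤ C)
    (hab : Summable fun i => a i / b i ^ 2) (hga : Summable fun i => ‖g i‖ ^ 2 / a i) :
    Summable fun i => ‖(1 / (b i : ℂ)) * (p i : ℂ) * g i‖ := by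
  refine ((summable_div_of_summable_sq_div_s6 ha hb (fun i => norm_nonneg _) hga hab).mul_left
    C).of_nonneg_of_le (fun i => norm_nonneg _) fun i => ?_
  have hnorm : ‖(1 / (b i : ℂ)) * (p i : ℂ) * g i‖ = |p i| * (‖g i‖ / b i) := by
    rw [norm_mul, norm_mul, norm_div, norm_one, Complex.norm_real, Complex.norm_real,
      Real.norm_of_nonneg (hb i).le, Real.norm_eq_abs]
    ring
  rw [hnorm]
  exact mul_le_mul_of_nonneg_right (hp i) (div_nonneg (norm_nonneg _) (hb i).le)

theorem mul_eq_sum_range_of_jacobi {K : Type*} [Field K] {b c P f g : ℕ → K}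
    (hb : ∀ i, b i ≠ 0) (hP : ∀ k, P k = c k * P (k + 1)) (hf0 : b 0 * f 0 = g 0)
    (hfk : ∀ k, 1 ≤ k → b k * (f k - c (k - 1) * f (k - 1)) = g k) (k : ℕ) :
    P k * f k = ∑ i ∈ range (k + 1), 1 / b i * P i * g i := by
  refine (mul_eq_sum_range_of_recurrence (h := fun i => g i / b i) hP ?_ (fun k => ?_) k).trans
    (sum_congr rfl fun i _ => by ring)
  · rw [eq_div_iff (hb 0), mul_comm, hf0]
  · rw [← hfk (k + 1) k.succ_pos, Nat.add_sub_cancel]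
    field_simp [hb (k + 1)]
    ring

theorem tendsto_tsum_of_mul_eq_sum_range {K : Type*} [NormedField K] {u f s : ℕ → K}
    (hu : Tendsto u atTop (𝓝 1)) (hf : ∀ k, u k * f k = ∑ i ∈ range (k + 1), s i)
    (hs : Summable s) : Tendsto f atTop (𝓝 (∑' i, s i)) := by
  have hlim := (hu.inv₀ one_ne_zero).mul
    ((hs.hasSum.tendsto_sum_nat).comp (tendsto_add_atTop_nat 1))
  rw [inv_one, one_mul] at hlim
  refine hlim.congr' ?_
  filter_upwards [hu.eventually_ne one_ne_zero] with k hk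
  rw [Function.comp_apply, ← hf k, inv_mul_cancel_left₀ hk]

/-- any `f` in the domain of the Jacobi type operator `A` (with
`Af = g` square-summable against `1/a′`) has a limit at infinity, given by the
absolutely convergent series `∑ᵢ (1/b(i))·P(i)·g(i)` where
`P(i) = ∏_{j=i}^∞ c(j)`. -/
theorem jacobi_A_limit_at_infinity (a' b c : ℕ → ℝ) (κ : ℝ) (P : ℕ → ℝ)
    (g f : ℕ → ℂ)
    (ha' : ∀ i, 0 < a' i) (hb : ∀ i, 0 < b i)
    (ht : Summable fun i => a' i / (b i)^2)
    (hκ : 0 < κ)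
    (hc : ∀ M N : ℕ, M ≤ N →
      κ ≤ ∏ j ∈ Finset.Icc M N, c j ∧ ∏ j ∈ Finset.Icc M N, c j ≤ 1 / κ)
    (hP : ∀ i, Tendsto (fun N => ∏ j ∈ Finset.Icc i N, c j) atTop (nhds (P i)))
    (hg : Summable fun i => ‖g i‖^2 / a' i)
    (hf0 : (b 0 : ℂ) * f 0 = g 0)
    (hfk : ∀ k, 1 ≤ k → (b k : ℂ) * (f k - (c (k-1) : ℂ) * f (k-1)) = g k) :
    Summable (fun i => ‖(1 / (b i : ℂ)) * (P i : ℂ) * g i‖) ∧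
    Tendsto f atTop (nhds (∑' i, (1 / (b i : ℂ)) * (P i : ℂ) * g i)) := by
  have hPmem (i : ℕ) : P i ∈ Set.Icc κ (1 / κ) :=
    isClosed_Icc.mem_of_tendsto (hP i) (eventually_atTop.2 ⟨i, hc i⟩)
  have hPpos (i : ℕ) : 0 < P i := hκ.trans_le (hPmem i).1
  have hsum := summable_norm_one_div_mul_mul ha' hb
    (fun i => (abs_of_pos (hPpos i)).trans_le (hPmem i).2) ht hg
  have hstep (k : ℕ) : P k = c k * P (k + 1) := eq_mul_of_tendsto_prod_Icc (hP k) (hP (k + 1))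
  have hP1 : Tendsto P atTop (𝓝 1) := by
    refine tendsto_one_of_eq_prod_range_mul (eq_prod_range_mul_of_eq_mul_succ hstep) ?_
      (hPpos 0).ne'
    refine (tendsto_add_atTop_iff_nat 1).mp ?_
    simpa only [range_eq_Ico, Ico_add_one_right_eq_Icc] using hP 0
  have hbne (i : ℕ) : (b i : ℂ) ≠ 0 := by exact_mod_cast (hb i).ne'
  refine ⟨hsum, tendsto_tsum_of_mul_eq_sum_range (Complex.ofReal_one ▸ hP1.ofReal)
    (mul_eq_sum_range_of_jacobi (c := fun k => (c k : ℂ)) hbne (fun k => ?_) hf0 hfk)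
    hsum.of_norm⟩
  exact_mod_cast hstep k
end

section
/- Let a, a′ : ℕ → ℝ and b : ℕ → ℝ be sequences of positive numbers with ∑_{k=0}^∞ 1/a(k) < ∞ and ∑_{i=0}^∞ a′(i)/b(i)² < ∞, let c : ℕ → ℝ and κ > 0 satisfy κ ≤ ∏_{j=M}^{N} c(j) ≤ 1/κ for all natural numbers M ≤ N, and assume the infinite product P := lim_{k→∞} ∏_{i=0}^{k−1} (1/c(i)) exists. Let g : ℕ → ℂ satisfy ∑_{i=0}^∞ |g(i)|²/a′(i) < ∞, and suppose f : ℕ → ℂ satisfies b(k)(f(k) − c(k)f(k+1)) = −g(k) for all k ≥ 0. Then lim_{k→∞} f(k) exists, and equals P·α where α ∈ ℂ is the unique constant such that f(k) − (∏_{i=0}^{k−1} 1/c(i))·α = −∑_{i=k}^∞ (1/b(i))·(∏_{j=k}^{i−1} c(j))·g(i) for all k. -/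
open Finset Filter

/-- any solution `f` of the Jacobi type equation `Āf = -g` has a
limit at infinity, equal to `P·α`, where `α` is the unique constant such that `f`
differs from the particular solution by `α` times the kernel solution. -/
theorem jacobi_Abar_limit_at_infinity (a a' b c : ℕ → ℝ) (κ P : ℝ)
    (g f : ℕ → ℂ)
    (ha : ∀ k, 0 < a k) (ha' : ∀ i, 0 < a' i) (hb : ∀ i, 0 < b i)
    (hs : Summable fun k => 1 / a k)
    (ht : Summable fun i => a' i / (b i)^2)
    (hκ : 0 < κ)
    (hc : ∀ M N : ℕ, M ≤ N →
      κ ≤ ∏ j ∈ Finset.Icc M N, c j ∧ ∏ j ∈ Finset.Icc M N, c j ≤ 1 / κ)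
    (hP : Tendsto (fun k => ∏ i ∈ Finset.range k, (c i)⁻¹) atTop (nhds P))
    (hg : Summable fun i => ‖g i‖^2 / a' i)
    (hf : ∀ k, (b k : ℂ) * (f k - (c k : ℂ) * f (k+1)) = -g k) :
    ∃ α : ℂ,
      (∀ k, f k - (∏ i ∈ Finset.range k, ((c i : ℂ))⁻¹) * α =
        -∑' i : ℕ, if k ≤ i then
          (1 / (b i : ℂ)) * (∏ j ∈ Finset.Ico k i, (c j : ℂ)) * g i else 0) ∧
      (∀ α' : ℂ,
        (∀ k, f k - (∏ i ∈ Finset.range k, ((c i : ℂ))⁻¹) * α' =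
          -∑' i : ℕ, if k ≤ i then
            (1 / (b i : ℂ)) * (∏ j ∈ Finset.Ico k i, (c j : ℂ)) * g i else 0) →
        α' = α) ∧
      Tendsto f atTop (nhds ((P : ℂ) * α)) := by
  have hc_pos : ∀ j, 0 < c j := fun j => by
    have h := (hc j j le_rfl).1
    simp at h
    linarith
  have hκ1 : κ ≤ 1 := by
    have h1 := (hc 0 0 le_rfl).1
    have h2 := (hc 0 0 le_rfl).2
    simp at h1 h2
    nlinarith [mul_inv_cancel₀ (ne_of_gt hκ), inv_pos.mpr hκ]
  have hκinv : (1:ℝ) ≤ κ⁻¹ := by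
    nlinarith [mul_inv_cancel₀ (ne_of_gt hκ), inv_pos.mpr hκ]
  have hprod : ∀ k i : ℕ, k ≤ i →
      κ ≤ ∏ j ∈ Finset.Ico k i, c j ∧ ∏ j ∈ Finset.Ico k i, c j ≤ κ⁻¹ := by
    intro k i hki
    rcases eq_or_lt_of_le hki with rfl | h
    · simp [Finset.Ico_self]
      exact ⟨hκ1, hκinv⟩
    · obtain ⟨m, rfl⟩ : ∃ m, i = m + 1 := ⟨i - 1, by omega⟩
      rw [Finset.Ico_add_one_right_eq_Icc]
      have := hc k m (by omega)
      rw [one_div] at this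
      exact this
  -- Cauchy-Schwarz / AM-GM summability
  have hS : Summable (fun i => ‖g i‖ / b i) := by
    have hbig : Summable (fun i => (‖g i‖^2 / a' i + a' i / (b i)^2) / 2) :=
      (hg.add ht).div_const 2
    refine Summable.of_nonneg_of_le
      (fun i => div_nonneg (norm_nonneg _) (hb i).le) (fun i => ?_) hbig
    have hA := ha' i
    have hB := hb i
    have hsq : (0:ℝ) < Real.sqrt (a' i) := Real.sqrt_pos.mpr hA
    have h2 := two_mul_le_add_sq (‖g i‖ / Real.sqrt (a' i)) (Real.sqrt (a' i) / b i)
    have e1 : (‖g i‖ / Real.sqrt (a' i))^2 = ‖g i‖^2 / a' i := by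
      rw [div_pow, Real.sq_sqrt hA.le]
    have e2 : (Real.sqrt (a' i) / b i)^2 = a' i / (b i)^2 := by
      rw [div_pow, Real.sq_sqrt hA.le]
    have e3 : 2 * (‖g i‖ / Real.sqrt (a' i)) * (Real.sqrt (a' i) / b i)
        = 2 * (‖g i‖ / b i) := by
      field_simp
    rw [e1, e2, e3] at h2
    linarith
  set F : ℕ → ℕ → ℂ := fun k i =>
    if k ≤ i then (1 / (b i : ℂ)) * (∏ j ∈ Finset.Ico k i, (c j : ℂ)) * g i else 0 with hF
  have hterm_nonneg : ∀ i : ℕ, 0 ≤ κ⁻¹ * (‖g i‖ / b i) := fun i =>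
    mul_nonneg (inv_nonneg.mpr hκ.le) (div_nonneg (norm_nonneg _) (hb i).le)
  have hBsum : ∀ k, Summable (fun i => if k ≤ i then κ⁻¹ * (‖g i‖ / b i) else 0) := by
    intro k
    refine Summable.of_nonneg_of_le (fun i => ?_) (fun i => ?_) (hS.mul_left κ⁻¹)
    · by_cases h : k ≤ i
      · simp only [if_pos h]; exact hterm_nonneg i
      · simp [h]
    · by_cases h : k ≤ i
      · simp [h]
      · simp only [if_neg h]; exact hterm_nonneg i
  have hFle : ∀ k i, ‖F k i‖ ≤ (if k ≤ i then κ⁻¹ * (‖g i‖ / b i) else 0) := by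
    intro k i
    by_cases h : k ≤ i
    · simp only [hF, if_pos h]
      have hp := hprod k i h
      have hB := hb i
      have e2 : (∏ j ∈ Finset.Ico k i, (c j : ℂ)) = ((∏ j ∈ Finset.Ico k i, c j : ℝ) : ℂ) := by
        push_cast; ring
      rw [norm_mul, norm_mul, e2, Complex.norm_real, norm_div, norm_one,
        Complex.norm_real]
      rw [Real.norm_of_nonneg hB.le, Real.norm_of_nonneg (le_trans hκ.le hp.1)]
      have h0 : 0 ≤ ‖g i‖ / b i := by positivity
      calc 1 / b i * (∏ j ∈ Finset.Ico k i, c j) * ‖g i‖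
          = (∏ j ∈ Finset.Ico k i, c j) * (‖g i‖ / b i) := by ring
        _ ≤ κ⁻¹ * (‖g i‖ / b i) := mul_le_mul_of_nonneg_right hp.2 h0
    · simp [hF, h]
  have hFnorm : ∀ k, Summable (fun i => ‖F k i‖) :=
    fun k => Summable.of_nonneg_of_le (fun i => norm_nonneg _) (hFle k) (hBsum k)
  have hFsum : ∀ k, Summable (F k) := fun k => (hFnorm k).of_norm
  have hbC : ∀ j, (b j : ℂ) ≠ 0 := fun j => Complex.ofReal_ne_zero.mpr (hb j).ne'
  have hcC : ∀ j, (c j : ℂ) ≠ 0 := fun j => Complex.ofReal_ne_zero.mpr (hc_pos j).ne'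
  have hsplit : ∀ k i, F k i = (if i = k then g k / (b k : ℂ) else 0) + (c k : ℂ) * F (k+1) i := by
    intro k i
    rcases lt_trichotomy i k with h | h | h
    · have h1 : ¬ k ≤ i := by omega
      have h2 : ¬ k + 1 ≤ i := by omega
      have h3 : i ≠ k := by omega
      simp [hF, h1, h2, h3]
    · subst h
      simp [hF, Finset.Ico_self]
      ring
    · have h1 : k ≤ i := h.le
      have h2 : k + 1 ≤ i := h
      have h3 : i ≠ k := by omega
      simp only [hF, if_pos h1, if_pos h2, if_neg h3, zero_add]
      rw [Finset.prod_eq_prod_Ico_succ_bot h]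
      ring
  have hrec : ∀ k, ∑' i, F k i = g k / (b k : ℂ) + (c k : ℂ) * ∑' i, F (k+1) i := by
    intro k
    have hδ : Summable (fun i : ℕ => if i = k then g k / (b k : ℂ) else 0) := by
      apply summable_of_ne_finset_zero (s := {k})
      intro i hi
      simp only [Finset.mem_singleton] at hi
      simp [hi]
    calc ∑' i, F k i
        = ∑' i, ((if i = k then g k / (b k : ℂ) else 0) + (c k : ℂ) * F (k+1) i) :=
          tsum_congr (hsplit k)
      _ = (∑' i, if i = k then g k / (b k : ℂ) else 0) + ∑' i, (c k : ℂ) * F (k+1) i :=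
          Summable.tsum_add hδ ((hFsum (k+1)).mul_left _)
      _ = g k / (b k : ℂ) + (c k : ℂ) * ∑' i, F (k+1) i := by
          rw [tsum_ite_eq, tsum_mul_left]
  have hfrec : ∀ k, f k = (c k : ℂ) * f (k+1) - g k / (b k : ℂ) := by
    intro k
    have hb0 := hbC k
    field_simp
    linear_combination hf k
  set α : ℂ := f 0 + ∑' i, F 0 i with hα
  have hw : ∀ k, f k + ∑' i, F k i = (∏ i ∈ Finset.range k, ((c i : ℂ))⁻¹) * α := by
    intro k
    induction k with
    | zero => simp [hα]
    | succ k ih =>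
      have h3 : (c k : ℂ) * (f (k+1) + ∑' i, F (k+1) i)
          = (∏ i ∈ Finset.range k, ((c i : ℂ))⁻¹) * α := by
        rw [← ih, hfrec k, hrec k]; ring
      have h4 : f (k+1) + ∑' i, F (k+1) i
          = ((c k : ℂ))⁻¹ * ((c k : ℂ) * (f (k+1) + ∑' i, F (k+1) i)) := by
        rw [← mul_assoc, inv_mul_cancel₀ (hcC k), one_mul]
      rw [Finset.prod_range_succ, h4, h3]
      ring
  have hmain : ∀ k, f k - (∏ i ∈ Finset.range k, ((c i : ℂ))⁻¹) * α = -∑' i, F k i :=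
    fun k => by linear_combination hw k
  refine ⟨α, fun k => by simpa only [hF] using hmain k, ?_, ?_⟩
  · intro α' hα'
    have h := hα' 0
    have h2 := hmain 0
    simp only [hF] at h2
    simp only [Finset.range_zero, Finset.prod_empty, one_mul] at h h2
    linear_combination h2 - h
  · -- limit
    have htail : ∀ k, ‖∑' i, F k i‖ ≤ κ⁻¹ * ∑' i, ‖g (i + k)‖ / b (i + k) := by
      intro k
      calc ‖∑' i, F k i‖ ≤ ∑' i, ‖F k i‖ := norm_tsum_le_tsum_norm (hFnorm k)
        _ ≤ ∑' i, (if k ≤ i then κ⁻¹ * (‖g i‖ / b i) else 0) :=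
            Summable.tsum_le_tsum (hFle k) (hFnorm k) (hBsum k)
        _ = κ⁻¹ * ∑' i, ‖g (i + k)‖ / b (i + k) := by
            rw [← Summable.sum_add_tsum_nat_add k (hBsum k)]
            rw [Finset.sum_eq_zero (fun i hi => by
              rw [if_neg]; simp only [Finset.mem_range] at hi; omega), zero_add]
            rw [tsum_congr (fun i => if_pos (Nat.le_add_left k i)), tsum_mul_left]
    have h0 : Tendsto (fun k => ∑' i, ‖g (i + k)‖ / b (i + k)) atTop (nhds 0) :=
      tendsto_sum_nat_add (fun i => ‖g i‖ / b i)
    have ht0 : Tendsto (fun k => κ⁻¹ * ∑' i, ‖g (i + k)‖ / b (i + k)) atTop (nhds 0) := by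
      simpa using h0.const_mul κ⁻¹
    have hlim0 : Tendsto (fun k => ∑' i, F k i) atTop (nhds 0) :=
      squeeze_zero_norm htail ht0
    have hprodC : Tendsto (fun k => (∏ i ∈ Finset.range k, ((c i : ℂ))⁻¹)) atTop
        (nhds ((P : ℂ))) := by
      have e : ∀ k, (∏ i ∈ Finset.range k, ((c i : ℂ))⁻¹)
          = ((∏ i ∈ Finset.range k, (c i)⁻¹ : ℝ) : ℂ) := by
        intro k; push_cast; ring
      exact Tendsto.congr (fun k => (e k).symm)
        ((Complex.continuous_ofReal.tendsto P).comp hP)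
    have hfin : Tendsto (fun k => (∏ i ∈ Finset.range k, ((c i : ℂ))⁻¹) * α - ∑' i, F k i)
        atTop (nhds ((P : ℂ) * α)) := by
      simpa using (hprodC.mul_const α).sub hlim0
    exact Tendsto.congr (fun k => by linear_combination - hmain k) hfin
end

section
/- Let a, a′ : ℕ → ℝ and b : ℕ → ℝ be sequences of positive numbers with s := ∑_{k=0}^∞ 1/a(k) < ∞ and t := ∑_{i=0}^∞ a′(i)/b(i)² < ∞, and let c : ℕ → ℝ and κ > 0 satisfy κ ≤ ∏_{j=M}^{N} c(j) ≤ 1/κ for all natural numbers M ≤ N. Then the linear map T₃ sending g to the sequence k ↦ ∑_{i=0}^{k} (1/b(i))·(∏_{j=i}^{k−1} c(j))·g(i) defines a bounded linear operator from ℓ²_{a′} to ℓ²_a with operator norm at most √(s·t)/κ, and T₃ is a compact operator. -/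
/-!
Row `k` of `T₃` is the functional `g ↦ ∑_{i ≤ k} w_k(i) g(i)` with
`w_k(i) = b(i)⁻¹ ∏_{j=i}^{k-1} c(j)`, so `|w_k(i)| ≤ 1 / (κ |b(i)|)`, and Cauchy–Schwarz in
`ℓ²_{a′}` bounds its squared norm by `∑_i |w_k(i)|² a′(i) ≤ t / κ²`, uniformly in `k`. Any family
of functionals `Φ_k` with `∑_k ‖Φ_k‖² / a(k) < ∞` defines an operator `x ↦ (Φ_k x)_k` into `ℓ²_a`
of norm at most the square root of that series, here at most `√(s t) / κ`. Truncating the family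
to `k < N` gives operators that factor through `𝕜^N`, hence are compact, and they converge to the
full operator in norm since the error is bounded by the tail of the series.
-/

open MeasureTheory Finset

/-- The weighted sequence space `ℓ²_a` realized as `L²` of the counting measure on
`ℕ` with density `1/a`. -/
noncomputable def wSeqMeasure (a : ℕ → ℝ) : Measure ℕ :=
  Measure.count.withDensity fun k => ENNReal.ofReal (1 / a k)

open scoped ENNReal Topology

section WeightedL2

variable {𝕜 : Type*} [RCLike 𝕜] {a : ℕ → ℝ}

theorem wSeqMeasure_singleton (a : ℕ → ℝ) (k : ℕ) :
    wSeqMeasure a {k} = ENNReal.ofReal (1 / a k) := by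
  simp [wSeqMeasure, withDensity_apply _ (measurableSet_singleton k)]

theorem ae_wSeqMeasure_iff (ha : ∀ k, 0 < a k) {P : ℕ → Prop} :
    (∀ᵐ k ∂wSeqMeasure a, P k) ↔ ∀ k, P k := by
  simp only [ae_iff_of_countable, wSeqMeasure_singleton, ne_eq, ENNReal.ofReal_eq_zero, not_le,
    one_div_pos, ha, true_imp_iff]

theorem ae_eq_wSeqMeasure_iff (ha : ∀ k, 0 < a k) {β : Type*} {f g : ℕ → β} :
    f =ᵐ[wSeqMeasure a] g ↔ f = g :=
  (ae_wSeqMeasure_iff ha).trans funext_iff.symm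

theorem eLpNorm_two_sq_wSeqMeasure (ha : ∀ k, 0 < a k) (f : ℕ → 𝕜) :
    eLpNorm f 2 (wSeqMeasure a) ^ 2 = ∑' k, ENNReal.ofReal (‖f k‖ ^ 2 / a k) := by
  have h := eLpNorm_nnreal_pow_eq_lintegral (f := f) (μ := wSeqMeasure a) (p := 2) two_ne_zero
  simp only [NNReal.coe_ofNat, ENNReal.coe_ofNat, ENNReal.rpow_ofNat] at h
  rw [h, wSeqMeasure, lintegral_withDensity_eq_lintegral_mul _ (measurable_of_countable _)
    (measurable_of_countable _), lintegral_count]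
  refine tsum_congr fun k => ?_
  rw [Pi.mul_apply, ← ofReal_norm, ← ENNReal.ofReal_pow (norm_nonneg _),
    ← ENNReal.ofReal_mul (one_div_nonneg.2 (ha k).le), one_div_mul_eq_div]

theorem memLp_two_wSeqMeasure_iff (ha : ∀ k, 0 < a k) {f : ℕ → 𝕜} :
    MemLp f 2 (wSeqMeasure a) ↔ Summable fun k => ‖f k‖ ^ 2 / a k := by
  have hf : eLpNorm f 2 (wSeqMeasure a) < ∞ ↔ Summable fun k => ‖f k‖ ^ 2 / a k := by
    have hnn : ∀ k, 0 ≤ ‖f k‖ ^ 2 / a k := fun k => div_nonneg (sq_nonneg _) (ha k).le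
    rw [← (ENNReal.pow_lt_top_iff (n := 2)).trans (or_iff_left two_ne_zero),
      eLpNorm_two_sq_wSeqMeasure ha]
    refine ⟨fun h => ?_, Summable.tsum_ofReal_lt_top⟩
    simpa only [ENNReal.toReal_ofReal (hnn _)] using ENNReal.summable_toReal h.ne
  exact ⟨fun h => hf.1 h.2, fun h => ⟨(measurable_of_countable f).aestronglyMeasurable, hf.2 h⟩⟩

theorem toReal_eLpNorm_two_sq_wSeqMeasure (ha : ∀ k, 0 < a k) (f : ℕ → 𝕜) :
    (eLpNorm f 2 (wSeqMeasure a)).toReal ^ 2 = ∑' k, ‖f k‖ ^ 2 / a k := by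
  rw [← ENNReal.toReal_pow, eLpNorm_two_sq_wSeqMeasure ha,
    ENNReal.tsum_toReal_eq fun _ => ENNReal.ofReal_ne_top]
  exact tsum_congr fun k => ENNReal.toReal_ofReal (div_nonneg (sq_nonneg _) (ha k).le)

theorem norm_sq_wSeqMeasure (ha : ∀ k, 0 < a k) (g : Lp 𝕜 2 (wSeqMeasure a)) :
    ‖g‖ ^ 2 = ∑' k, ‖g k‖ ^ 2 / a k := by
  rw [Lp.norm_def, toReal_eLpNorm_two_sq_wSeqMeasure ha]

theorem norm_toLp_sq_wSeqMeasure (ha : ∀ k, 0 < a k) {f : ℕ → 𝕜}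
    (hf : MemLp f 2 (wSeqMeasure a)) : ‖hf.toLp f‖ ^ 2 = ∑' k, ‖f k‖ ^ 2 / a k := by
  rw [Lp.norm_toLp, toReal_eLpNorm_two_sq_wSeqMeasure ha]

theorem norm_sum_mul_le_sqrt_mul_norm (ha : ∀ k, 0 < a k) (s : Finset ℕ) (w : ℕ → 𝕜)
    (g : Lp 𝕜 2 (wSeqMeasure a)) :
    ‖∑ i ∈ s, w i * g i‖ ≤ √(∑ i ∈ s, ‖w i‖ ^ 2 * a i) * ‖g‖ := by
  have hsqrt : ∀ i, √(a i) ≠ 0 := fun i => (Real.sqrt_pos.2 (ha i)).ne'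
  have hg : ∑ i ∈ s, ‖g i‖ ^ 2 / a i ≤ ‖g‖ ^ 2 := by
    rw [norm_sq_wSeqMeasure ha]
    exact ((memLp_two_wSeqMeasure_iff ha).1 (Lp.memLp g)).sum_le_tsum s
      fun i _ => div_nonneg (sq_nonneg _) (ha i).le
  calc ‖∑ i ∈ s, w i * g i‖
      ≤ ∑ i ∈ s, (‖w i‖ * √(a i)) * (‖g i‖ / √(a i)) := by
        refine (norm_sum_le _ _).trans_eq (sum_congr rfl fun i _ => ?_)
        rw [norm_mul]; field_simp [hsqrt i]
    _ ≤ √(∑ i ∈ s, (‖w i‖ * √(a i)) ^ 2) * √(∑ i ∈ s, (‖g i‖ / √(a i)) ^ 2) :=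
        Real.sum_mul_le_sqrt_mul_sqrt _ _ _
    _ = √(∑ i ∈ s, ‖w i‖ ^ 2 * a i) * √(∑ i ∈ s, ‖g i‖ ^ 2 / a i) := by
        simp only [mul_pow, div_pow, Real.sq_sqrt (ha _).le]
    _ ≤ √(∑ i ∈ s, ‖w i‖ ^ 2 * a i) * ‖g‖ := by
        gcongr
        exact Real.sqrt_le_iff.2 ⟨norm_nonneg _, hg⟩

noncomputable def wSeqPairing (ha : ∀ k, 0 < a k) (s : Finset ℕ) (w : ℕ → 𝕜) :
    StrongDual 𝕜 (Lp 𝕜 2 (wSeqMeasure a)) :=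
  LinearMap.mkContinuous
    { toFun g := ∑ i ∈ s, w i * g i
      map_add' f g := by
        simp only [(ae_eq_wSeqMeasure_iff ha).1 (Lp.coeFn_add f g), Pi.add_apply, mul_add,
          sum_add_distrib]
      map_smul' z g := by
        simp only [(ae_eq_wSeqMeasure_iff ha).1 (Lp.coeFn_smul z g), Pi.smul_apply, smul_eq_mul,
          RingHom.id_apply, mul_sum]
        exact sum_congr rfl fun i _ => mul_left_comm _ _ _ }
    _ (norm_sum_mul_le_sqrt_mul_norm ha s w)

theorem norm_wSeqPairing_le (ha : ∀ k, 0 < a k) (s : Finset ℕ) (w : ℕ → 𝕜) :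
    ‖wSeqPairing ha s w‖ ≤ √(∑ i ∈ s, ‖w i‖ ^ 2 * a i) :=
  LinearMap.mkContinuous_norm_le _ (Real.sqrt_nonneg _) _

end WeightedL2

section OfFunctionals

variable {𝕜 E : Type*} [RCLike 𝕜] [NormedAddCommGroup E] [NormedSpace 𝕜 E] {a : ℕ → ℝ}

theorem norm_apply_sq_div_le {r : ℝ} (hr : 0 ≤ r) (φ : StrongDual 𝕜 E) (x : E) :
    ‖φ x‖ ^ 2 / r ≤ ‖φ‖ ^ 2 / r * ‖x‖ ^ 2 := by
  rw [div_mul_eq_mul_div, ← mul_pow]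
  gcongr
  exact φ.le_opNorm x

theorem summable_norm_apply_sq_div (ha : ∀ k, 0 < a k) {Φ : ℕ → StrongDual 𝕜 E}
    (hΦ : Summable fun k => ‖Φ k‖ ^ 2 / a k) (x : E) :
    Summable fun k => ‖Φ k x‖ ^ 2 / a k :=
  (hΦ.mul_right _).of_nonneg_of_le (fun k => div_nonneg (sq_nonneg _) (ha k).le)
    fun k => norm_apply_sq_div_le (ha k).le (Φ k) x

theorem tsum_norm_apply_sq_div_le (ha : ∀ k, 0 < a k) {Φ : ℕ → StrongDual 𝕜 E}
    (hΦ : Summable fun k => ‖Φ k‖ ^ 2 / a k) (x : E) :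
    ∑' k, ‖Φ k x‖ ^ 2 / a k ≤ (∑' k, ‖Φ k‖ ^ 2 / a k) * ‖x‖ ^ 2 :=
  ((summable_norm_apply_sq_div ha hΦ x).tsum_le_tsum
    (fun k => norm_apply_sq_div_le (ha k).le (Φ k) x) (hΦ.mul_right _)).trans_eq tsum_mul_right

theorem memLp_two_wSeqMeasure_apply (ha : ∀ k, 0 < a k) {Φ : ℕ → StrongDual 𝕜 E}
    (hΦ : Summable fun k => ‖Φ k‖ ^ 2 / a k) (x : E) :
    MemLp (fun k => Φ k x) 2 (wSeqMeasure a) :=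
  (memLp_two_wSeqMeasure_iff ha).2 (summable_norm_apply_sq_div ha hΦ x)

noncomputable def wSeqOfFunctionals (ha : ∀ k, 0 < a k) (Φ : ℕ → StrongDual 𝕜 E)
    (hΦ : Summable fun k => ‖Φ k‖ ^ 2 / a k) : E →L[𝕜] Lp 𝕜 2 (wSeqMeasure a) :=
  LinearMap.mkContinuous
    { toFun x := (memLp_two_wSeqMeasure_apply ha hΦ x).toLp fun k => Φ k x
      map_add' x y := by
        simp only [map_add]
        exact MemLp.toLp_add _ _
      map_smul' z x := by
        simp only [map_smul]
        exact MemLp.toLp_const_smul z _ }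
    √(∑' k, ‖Φ k‖ ^ 2 / a k) fun x => by
      rw [← Real.sqrt_sq (norm_nonneg x),
        ← Real.sqrt_mul (tsum_nonneg fun k => div_nonneg (sq_nonneg _) (ha k).le)]
      refine Real.le_sqrt_of_sq_le ?_
      rw [LinearMap.coe_mk, AddHom.coe_mk, norm_toLp_sq_wSeqMeasure ha]
      exact tsum_norm_apply_sq_div_le ha hΦ x

theorem coeFn_wSeqOfFunctionals (ha : ∀ k, 0 < a k) (Φ : ℕ → StrongDual 𝕜 E)
    (hΦ : Summable fun k => ‖Φ k‖ ^ 2 / a k) (x : E) :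
    ⇑(wSeqOfFunctionals ha Φ hΦ x) = fun k => Φ k x :=
  (ae_eq_wSeqMeasure_iff ha).1 (memLp_two_wSeqMeasure_apply ha hΦ x).coeFn_toLp

theorem norm_wSeqOfFunctionals_le (ha : ∀ k, 0 < a k) (Φ : ℕ → StrongDual 𝕜 E)
    (hΦ : Summable fun k => ‖Φ k‖ ^ 2 / a k) :
    ‖wSeqOfFunctionals ha Φ hΦ‖ ≤ √(∑' k, ‖Φ k‖ ^ 2 / a k) :=
  LinearMap.mkContinuous_norm_le _ (Real.sqrt_nonneg _) _

theorem wSeqOfFunctionals_sub (ha : ∀ k, 0 < a k) {Φ Ψ : ℕ → StrongDual 𝕜 E}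
    (hΦ : Summable fun k => ‖Φ k‖ ^ 2 / a k) (hΨ : Summable fun k => ‖Ψ k‖ ^ 2 / a k)
    (hΦΨ : Summable fun k => ‖(Φ - Ψ) k‖ ^ 2 / a k) :
    wSeqOfFunctionals ha Φ hΦ - wSeqOfFunctionals ha Ψ hΨ =
      wSeqOfFunctionals ha (Φ - Ψ) hΦΨ := by
  ext1 x
  refine Lp.ext ((ae_eq_wSeqMeasure_iff ha).2 ?_)
  rw [sub_apply, (ae_eq_wSeqMeasure_iff ha).1 (Lp.coeFn_sub _ _)]
  simp only [coeFn_wSeqOfFunctionals]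
  rfl

theorem isCompactOperator_wSeqOfFunctionals_of_finite (ha : ∀ k, 0 < a k)
    {Φ : ℕ → StrongDual 𝕜 E} (hΦ : Summable fun k => ‖Φ k‖ ^ 2 / a k) (s : Finset ℕ)
    (hs : ∀ k ∉ s, Φ k = 0) : IsCompactOperator (wSeqOfFunctionals ha Φ hΦ) := by
  let P : E →L[𝕜] (s → 𝕜) := ContinuousLinearMap.pi fun i => Φ i
  let Ψ : ℕ → StrongDual 𝕜 (s → 𝕜) := fun k =>
    if h : k ∈ s then ContinuousLinearMap.proj ⟨k, h⟩ else 0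
  have hΨ : Summable fun k => ‖Ψ k‖ ^ 2 / a k :=
    summable_of_ne_finset_zero (s := s) fun k hk => by simp [Ψ, hk]
  have hfactor : wSeqOfFunctionals ha Φ hΦ = (wSeqOfFunctionals ha Ψ hΨ).comp P := by
    ext1 x
    refine Lp.ext ((ae_eq_wSeqMeasure_iff ha).2 ?_)
    rw [ContinuousLinearMap.comp_apply, coeFn_wSeqOfFunctionals, coeFn_wSeqOfFunctionals]
    funext k
    by_cases hk : k ∈ s
    · simp [Ψ, P, hk]
    · simp [Ψ, hk, hs k hk]
  rw [hfactor]
  exact (isCompactOperator_of_locallyCompactSpace_dom P).clm_comp (wSeqOfFunctionals ha Ψ hΨ)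

theorem isCompactOperator_wSeqOfFunctionals (ha : ∀ k, 0 < a k) (Φ : ℕ → StrongDual 𝕜 E)
    (hΦ : Summable fun k => ‖Φ k‖ ^ 2 / a k) : IsCompactOperator (wSeqOfFunctionals ha Φ hΦ) := by
  let head : ℕ → ℕ → StrongDual 𝕜 E := fun N k => if k < N then Φ k else 0
  have hhead : ∀ N, Summable fun k => ‖head N k‖ ^ 2 / a k := fun N =>
    summable_of_ne_finset_zero (s := range N) fun k hk => by simp_all [head]
  have hnn : ∀ k, 0 ≤ ‖Φ k‖ ^ 2 / a k := fun k => div_nonneg (sq_nonneg _) (ha k).le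
  have htail : ∀ N k, ‖(Φ - head N) k‖ ^ 2 / a k = if k < N then 0 else ‖Φ k‖ ^ 2 / a k :=
    fun N k => by by_cases hk : k < N <;> simp [head, hk]
  have htail_summable : ∀ N, Summable fun k => ‖(Φ - head N) k‖ ^ 2 / a k := fun N =>
    hΦ.of_nonneg_of_le (fun k => by rw [htail]; split_ifs <;> simp [hnn k])
      (fun k => by rw [htail]; split_ifs <;> simp [hnn k])
  have htail_tsum :
      ∀ N, ∑' k, ‖(Φ - head N) k‖ ^ 2 / a k = ∑' k, ‖Φ (k + N)‖ ^ 2 / a (k + N) := fun N => by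
    rw [← (htail_summable N).sum_add_tsum_nat_add N,
      sum_eq_zero fun k hk => by simp only [htail, if_pos (mem_range.1 hk)], zero_add]
    exact tsum_congr fun k => by simp only [htail, if_neg (Nat.not_lt.2 (Nat.le_add_left N k))]
  refine isCompactOperator_of_tendsto (l := Filter.atTop)
    (F := fun N => wSeqOfFunctionals ha (head N) (hhead N)) ?_
    (Filter.Eventually.of_forall fun N =>
      isCompactOperator_wSeqOfFunctionals_of_finite ha _ (range N) fun k hk => by
        simp_all [head])
  have hlim :
      Filter.Tendsto (fun N => √(∑' k, ‖Φ (k + N)‖ ^ 2 / a (k + N))) Filter.atTop (𝓝 0) := by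
    have h := (Real.continuous_sqrt.tendsto 0).comp (tendsto_sum_nat_add fun k => ‖Φ k‖ ^ 2 / a k)
    rwa [Real.sqrt_zero] at h
  rw [tendsto_iff_norm_sub_tendsto_zero]
  refine squeeze_zero (fun N => norm_nonneg _) (fun N => ?_) hlim
  rw [norm_sub_rev, wSeqOfFunctionals_sub ha hΦ (hhead N) (htail_summable N), ← htail_tsum]
  exact norm_wSeqOfFunctionals_le ha _ _

end OfFunctionals

section JacobiT3

variable {a' b c : ℕ → ℝ} {κ : ℝ}

noncomputable def jacobiT3Kernel (b c : ℕ → ℝ) (k i : ℕ) : ℂ :=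
  (1 / (b i : ℂ)) * ∏ j ∈ Ico i k, (c j : ℂ)

theorem abs_prod_Ico_le_one_div (hκ : 0 < κ)
    (hc : ∀ M N : ℕ, M ≤ N →
      κ ≤ ∏ j ∈ Finset.Icc M N, c j ∧ ∏ j ∈ Finset.Icc M N, c j ≤ 1 / κ) (i k : ℕ) :
    |∏ j ∈ Ico i k, c j| ≤ 1 / κ := by
  rcases lt_or_ge i k with hik | hki
  · obtain ⟨m, rfl⟩ := Nat.exists_eq_add_of_lt hik
    obtain ⟨hlow, hup⟩ := hc i (i + m) (Nat.le_add_right i m)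
    rw [Ico_add_one_right_eq_Icc, abs_of_pos (hκ.trans_le hlow)]
    exact hup
  · -- the empty product is `1`, and `κ ≤ c 0 ≤ 1 / κ` forces `κ ≤ 1`
    obtain ⟨hlow, hup⟩ := hc 0 0 le_rfl
    have hκ1 : κ ≤ 1 := by
      have hκκ := (le_div_iff₀ hκ).1 (hlow.trans hup)
      nlinarith
    rw [Ico_eq_empty_of_le hki, prod_empty, abs_one]
    exact one_le_one_div hκ hκ1

theorem sum_norm_jacobiT3Kernel_sq_mul_le (ha' : ∀ i, 0 < a' i)
    (ht : Summable fun i => a' i / (b i)^2) (hκ : 0 < κ)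
    (hc : ∀ M N : ℕ, M ≤ N →
      κ ≤ ∏ j ∈ Finset.Icc M N, c j ∧ ∏ j ∈ Finset.Icc M N, c j ≤ 1 / κ) (k : ℕ) :
    ∑ i ∈ range (k + 1), ‖jacobiT3Kernel b c k i‖ ^ 2 * a' i
      ≤ (∑' i, a' i / (b i)^2) / κ ^ 2 := by
  have hterm : ∀ i, ‖jacobiT3Kernel b c k i‖ ^ 2 * a' i ≤ a' i / (b i)^2 / κ ^ 2 := fun i => by
    have hprod := abs_prod_Ico_le_one_div hκ hc i k
    have hnorm : ‖jacobiT3Kernel b c k i‖ = |1 / b i| * |∏ j ∈ Ico i k, c j| := by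
      simp [jacobiT3Kernel, ← Complex.ofReal_prod, Complex.norm_real, abs_prod]
    calc ‖jacobiT3Kernel b c k i‖ ^ 2 * a' i
        = a' i / (b i)^2 * |∏ j ∈ Ico i k, c j| ^ 2 := by
          rw [hnorm, mul_pow, sq_abs, div_pow, one_pow]; ring
      _ ≤ a' i / (b i)^2 * (1 / κ) ^ 2 := by gcongr; exact div_nonneg (ha' i).le (sq_nonneg _)
      _ = a' i / (b i)^2 / κ ^ 2 := by ring
  calc ∑ i ∈ range (k + 1), ‖jacobiT3Kernel b c k i‖ ^ 2 * a' i
      ≤ ∑ i ∈ range (k + 1), a' i / (b i)^2 / κ ^ 2 := sum_le_sum fun i _ => hterm i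
    _ = (∑ i ∈ range (k + 1), a' i / (b i)^2) / κ ^ 2 := (sum_div ..).symm
    _ ≤ (∑' i, a' i / (b i)^2) / κ ^ 2 := by
      gcongr
      exact ht.sum_le_tsum _ fun i _ => div_nonneg (ha' i).le (sq_nonneg _)

end JacobiT3

theorem jacobi_T3_bounded_compact_general (a a' b c : ℕ → ℝ) (κ : ℝ)
    (ha : ∀ k, 0 < a k) (ha' : ∀ i, 0 < a' i)
    (hs : Summable fun k => 1 / a k)
    (ht : Summable fun i => a' i / (b i)^2)
    (hκ : 0 < κ)
    (hc : ∀ M N : ℕ, M ≤ N →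
      κ ≤ ∏ j ∈ Finset.Icc M N, c j ∧ ∏ j ∈ Finset.Icc M N, c j ≤ 1 / κ) :
    ∃ T : Lp ℂ 2 (wSeqMeasure a') →L[ℂ] Lp ℂ 2 (wSeqMeasure a),
      (∀ g : Lp ℂ 2 (wSeqMeasure a'),
        ⇑(T g) =ᵐ[wSeqMeasure a] fun k => ∑ i ∈ Finset.range (k+1),
          (1 / (b i : ℂ)) * (∏ j ∈ Finset.Ico i k, (c j : ℂ)) * g i) ∧
      ‖T‖ ≤ Real.sqrt ((∑' k, 1 / a k) * (∑' i, a' i / (b i)^2)) / κ ∧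
      IsCompactOperator T := by
  set t := ∑' i, a' i / (b i)^2
  let Φ : ℕ → StrongDual ℂ (Lp ℂ 2 (wSeqMeasure a')) := fun k =>
    wSeqPairing ha' (range (k + 1)) (jacobiT3Kernel b c k)
  have hΦ_le : ∀ k, ‖Φ k‖ ^ 2 / a k ≤ t / κ ^ 2 * (1 / a k) := fun k => by
    rw [div_eq_mul_one_div]
    gcongr
    · exact (one_div_pos.2 (ha k)).le
    · refine (pow_le_pow_left₀ (norm_nonneg _) (norm_wSeqPairing_le ..) 2).trans ?_
      rw [Real.sq_sqrt (sum_nonneg fun i _ => by have := ha' i; positivity)]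
      exact sum_norm_jacobiT3Kernel_sq_mul_le ha' ht hκ hc k
  have hΦ : Summable fun k => ‖Φ k‖ ^ 2 / a k :=
    (hs.mul_left _).of_nonneg_of_le (fun k => div_nonneg (sq_nonneg _) (ha k).le) hΦ_le
  refine ⟨wSeqOfFunctionals ha Φ hΦ,
    fun g => .of_eq (coeFn_wSeqOfFunctionals ha Φ hΦ g), ?_,
    isCompactOperator_wSeqOfFunctionals ha Φ hΦ⟩
  calc ‖wSeqOfFunctionals ha Φ hΦ‖
      ≤ √(∑' k, ‖Φ k‖ ^ 2 / a k) := norm_wSeqOfFunctionals_le ha Φ hΦ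
    _ ≤ √((∑' k, 1 / a k) * t / κ ^ 2) := by
      gcongr
      refine (hΦ.tsum_le_tsum hΦ_le (hs.mul_left _)).trans_eq ?_
      rw [tsum_mul_left]; ring
    _ = √((∑' k, 1 / a k) * t) / κ := by
      rw [Real.sqrt_div' _ (sq_nonneg κ), Real.sqrt_sq hκ.le]

/-- the operator `T₃ : g ↦ (k ↦ ∑_{i=0}^k (1/b(i))(∏_{j=i}^{k-1}c(j))g(i))`
is a bounded operator from `ℓ²_{a′}` to `ℓ²_a` of norm at most `√(s·t)/κ`, and it is
a compact operator. -/
theorem jacobi_T3_bounded_compact (a a' b c : ℕ → ℝ) (κ : ℝ)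
    (ha : ∀ k, 0 < a k) (ha' : ∀ i, 0 < a' i) (hb : ∀ i, 0 < b i)
    (hs : Summable fun k => 1 / a k)
    (ht : Summable fun i => a' i / (b i)^2)
    (hκ : 0 < κ)
    (hc : ∀ M N : ℕ, M ≤ N →
      κ ≤ ∏ j ∈ Finset.Icc M N, c j ∧ ∏ j ∈ Finset.Icc M N, c j ≤ 1 / κ) :
    ∃ T : Lp ℂ 2 (wSeqMeasure a') →L[ℂ] Lp ℂ 2 (wSeqMeasure a),
      (∀ g : Lp ℂ 2 (wSeqMeasure a'),
        ⇑(T g) =ᵐ[wSeqMeasure a] fun k => ∑ i ∈ Finset.range (k+1),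
          (1 / (b i : ℂ)) * (∏ j ∈ Finset.Ico i k, (c j : ℂ)) * g i) ∧
      ‖T‖ ≤ Real.sqrt ((∑' k, 1 / a k) * (∑' i, a' i / (b i)^2)) / κ ∧
      IsCompactOperator T :=
  jacobi_T3_bounded_compact_general a a' b c κ ha ha' hs ht hκ hc
end

section
/- Let q be a real number with 0 < q < 1, define S(k) := q^k(1−q) for k ∈ ℕ, and for integers n ≥ 1 define a^{(n)}(k) := (S(k)·S(k+n))^{−1/2} and b^{(n)}(k) := a^{(n−1)}(k)·√(1−q^{k+n}). Then: (i) ∑_{k=0}^∞ 1/a^{(n)}(k) = q^{n/2}; and (ii) ∑_{k=0}^∞ a^{(n)}(k)/b^{(n)}(k)² = (1−q)·q^{n/2−1}·∑_{k=0}^∞ q^k/(1−q^{k+n}) ≤ q^{(n−2)/2}/(1−q). In particular ∑_k 1/a^{(n)}(k) → 0 as n → ∞ and ∑_k a^{(n)}(k)/b^{(n)}(k)² is bounded in n. -/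
/-!
Since `√(S k * S (k + n)) = (1 - q) q^k q^(n/2)`, the terms `1 / a n k` form a geometric
sequence summing to `q^(n/2)`, while `a n k / (b n k)^2 = (1 - q) q^(n/2 - 1) q^k / (1 - q^(k+n))`.
For `n ≥ 1` the denominator `1 - q^(k+n)` is at least `1 - q`, so the last series is dominated by
the geometric series `∑ q^k / (1 - q) = (1 - q)⁻²`.
-/

open Filter

section

variable {q : ℝ}

lemma rpow_natCast_div_two_sq (hq : 0 ≤ q) (m : ℕ) : (q ^ ((m : ℝ) / 2)) ^ 2 = q ^ m := by
  rw [Real.rpow_div_two_eq_sqrt _ hq, Real.rpow_natCast, ← pow_mul, mul_comm, pow_mul,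
    Real.sq_sqrt hq]

lemma sqrt_pow_mul_pow_add (hq0 : 0 ≤ q) (hq1 : q ≤ 1) (k m : ℕ) :
    √(q ^ k * (1 - q) * (q ^ (k + m) * (1 - q))) = (1 - q) * q ^ k * q ^ ((m : ℝ) / 2) := by
  have h1q : 0 ≤ 1 - q := sub_nonneg.2 hq1
  rw [← Real.sqrt_sq (by positivity : 0 ≤ (1 - q) * q ^ k * q ^ ((m : ℝ) / 2)), mul_pow, mul_pow,
    rpow_natCast_div_two_sq hq0, pow_add]
  ring_nf

lemma tsum_one_sub_mul_pow (hq0 : 0 ≤ q) (hq1 : q < 1) : ∑' k : ℕ, (1 - q) * q ^ k = 1 := by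
  rw [tsum_mul_left, tsum_geometric_of_lt_one hq0 hq1, mul_inv_cancel₀ (sub_pos.2 hq1).ne']

lemma inv_div_inv_mul_sqrt_sq (hq0 : 0 < q) (hq1 : q < 1) (k : ℕ) {n : ℕ} (hn : 1 ≤ n) :
    ((1 - q) * q ^ k * q ^ ((n : ℝ) / 2))⁻¹ /
        (((1 - q) * q ^ k * q ^ (((n : ℝ) - 1) / 2))⁻¹ * √(1 - q ^ (k + n))) ^ 2 =
      (1 - q) * q ^ ((n : ℝ) / 2 - 1) * (q ^ k / (1 - q ^ (k + n))) := by
  have h1q : 0 < 1 - q := sub_pos.2 hq1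
  have hkn : 0 < 1 - q ^ (k + n) := sub_pos.2 (pow_lt_one₀ hq0.le hq1 (by omega))
  have hsq : (q ^ (((n : ℝ) - 1) / 2)) ^ 2 = q ^ ((n : ℝ) - 1) := by
    rw [← Real.rpow_natCast, ← Real.rpow_mul hq0.le]; norm_num
  rw [mul_pow, Real.sq_sqrt hkn.le, inv_pow, mul_pow, mul_pow, hsq]
  field_simp
  rw [← Real.rpow_add hq0]
  ring_nf

lemma pow_div_one_sub_pow_le (hq0 : 0 ≤ q) (hq1 : q < 1) (k : ℕ) {n : ℕ} (hn : 1 ≤ n) :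
    q ^ k / (1 - q ^ (k + n)) ≤ q ^ k / (1 - q) := by
  have hqkn : q ^ (k + n) ≤ q := pow_le_of_le_one hq0 hq1.le (by omega)
  exact div_le_div_of_nonneg_left (by positivity) (sub_pos.2 hq1) (by linarith)

lemma tsum_pow_div_one_sub_pow_le (hq0 : 0 ≤ q) (hq1 : q < 1) {n : ℕ} (hn : 1 ≤ n) :
    ∑' k : ℕ, q ^ k / (1 - q ^ (k + n)) ≤ ((1 - q) ^ 2)⁻¹ := by
  have hgeom := (summable_geometric_of_lt_one hq0 hq1).div_const (1 - q)
  have hnonneg (k : ℕ) : 0 ≤ q ^ k / (1 - q ^ (k + n)) :=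
    div_nonneg (by positivity) (sub_nonneg.2 (pow_le_one₀ hq0 hq1.le))
  calc ∑' k : ℕ, q ^ k / (1 - q ^ (k + n))
      ≤ ∑' k : ℕ, q ^ k / (1 - q) :=
        Summable.tsum_le_tsum (pow_div_one_sub_pow_le hq0 hq1 · hn)
          (hgeom.of_nonneg_of_le hnonneg (pow_div_one_sub_pow_le hq0 hq1 · hn)) hgeom
    _ = ((1 - q) ^ 2)⁻¹ := by
        rw [tsum_div_const, tsum_geometric_of_lt_one hq0 hq1, sq, mul_inv, div_eq_mul_inv]

lemma tendsto_rpow_natCast_div_two (hq0 : 0 ≤ q) (hq1 : q < 1) :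
    Tendsto (fun n : ℕ => q ^ ((n : ℝ) / 2)) atTop (nhds 0) := by
  simp_rw [Real.rpow_div_two_eq_sqrt _ hq0, Real.rpow_natCast]
  exact tendsto_pow_atTop_nhds_zero_of_lt_one (Real.sqrt_nonneg q)
    (by simpa using Real.sqrt_lt_sqrt hq0 hq1)

end

/-- for the `q`-weights `S(k) = q^k(1-q)`,
`a⁽ⁿ⁾(k) = (S(k)S(k+n))^{-1/2}` and `b⁽ⁿ⁾(k) = a⁽ⁿ⁻¹⁾(k)√(1-q^{k+n})`, one has
`s(n) = ∑ₖ 1/a⁽ⁿ⁾(k) = q^{n/2}` and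
`t(n) = ∑ₖ a⁽ⁿ⁾(k)/b⁽ⁿ⁾(k)² = (1-q)q^{n/2-1}∑ₖ q^k/(1-q^{k+n}) ≤ q^{(n-2)/2}/(1-q)`;
in particular `s(n) → 0` and `t(n)` is bounded in `n`. -/
theorem q_weights_s_and_t (q : ℝ) (hq0 : 0 < q) (hq1 : q < 1)
    (S : ℕ → ℝ) (hS : ∀ k, S k = q^k * (1 - q))
    (a : ℕ → ℕ → ℝ) (ha : ∀ m k, a m k = (Real.sqrt (S k * S (k+m)))⁻¹)
    (b : ℕ → ℕ → ℝ)
    (hb : ∀ m k, 1 ≤ m → b m k = a (m-1) k * Real.sqrt (1 - q^(k+m))) :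
    (∀ n : ℕ, 1 ≤ n → ∑' k, 1 / a n k = q ^ ((n : ℝ) / 2)) ∧
    (∀ n : ℕ, 1 ≤ n →
      ∑' k, a n k / (b n k)^2 =
        (1 - q) * q ^ ((n : ℝ) / 2 - 1) * ∑' k : ℕ, q^k / (1 - q^(k+n)) ∧
      ∑' k, a n k / (b n k)^2 ≤ q ^ (((n : ℝ) - 2) / 2) / (1 - q)) ∧
    Tendsto (fun n : ℕ => ∑' k, 1 / a n k) atTop (nhds 0) ∧
    (∃ C : ℝ, ∀ n : ℕ, 1 ≤ n → ∑' k, a n k / (b n k)^2 ≤ C) := by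
  have ha' (m k : ℕ) : a m k = ((1 - q) * q ^ k * q ^ ((m : ℝ) / 2))⁻¹ := by
    rw [ha, hS, hS, sqrt_pow_mul_pow_add hq0.le hq1.le]
  have hs (n : ℕ) : ∑' k, 1 / a n k = q ^ ((n : ℝ) / 2) := by
    simp_rw [ha', one_div, inv_inv]
    rw [tsum_mul_right, tsum_one_sub_mul_pow hq0.le hq1, one_mul]
  have ht (n : ℕ) (hn : 1 ≤ n) : ∑' k, a n k / (b n k)^2 =
      (1 - q) * q ^ ((n : ℝ) / 2 - 1) * ∑' k : ℕ, q^k / (1 - q^(k+n)) := by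
    rw [← tsum_mul_left]
    refine tsum_congr fun k => ?_
    rw [hb n k hn, ha', ha', Nat.cast_sub hn, Nat.cast_one,
      inv_div_inv_mul_sqrt_sq hq0 hq1 k hn]
  have htle (n : ℕ) (hn : 1 ≤ n) :
      ∑' k, a n k / (b n k)^2 ≤ q ^ (((n : ℝ) - 2) / 2) / (1 - q) := by
    have h1q : 0 < 1 - q := sub_pos.2 hq1
    calc ∑' k, a n k / (b n k)^2
        ≤ (1 - q) * q ^ ((n : ℝ) / 2 - 1) * ((1 - q) ^ 2)⁻¹ := by
          rw [ht n hn]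
          exact mul_le_mul_of_nonneg_left (tsum_pow_div_one_sub_pow_le hq0.le hq1 hn)
            (by positivity)
      _ = q ^ (((n : ℝ) - 2) / 2) / (1 - q) := by
          rw [sub_div, div_self two_ne_zero]
          field_simp
  refine ⟨fun n _ => hs n, fun n hn => ⟨ht n hn, htle n hn⟩, ?_, ?_⟩
  · simpa only [hs] using tendsto_rpow_natCast_div_two hq0.le hq1
  · refine ⟨q ^ (-(1 : ℝ) / 2) / (1 - q), fun n hn => (htle n hn).trans ?_⟩
    have hn' : (1 : ℝ) ≤ n := by exact_mod_cast hn
    exact (div_le_div_iff_of_pos_right (sub_pos.2 hq1)).2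
      (Real.rpow_le_rpow_of_exponent_ge hq0 hq1.le (by linarith))
end

section
/- Let q be a real number with 0 < q < 1 and set w(k) := √(1−q^{k+1}) for k ∈ ℕ. Then the infinite product ∏_{j=1}^∞ (1−q^j) converges to a strictly positive number P, and for every integer n ≥ 1 and all natural numbers M ≤ N one has √P ≤ ∏_{k=M}^{N} w(k)/w(k+n) ≤ 1. -/
open Finset Filter

private lemma one_sub_pow_pos' {q : ℝ} (hq0 : 0 < q) (hq1 : q < 1) (j : ℕ) (hj : 1 ≤ j) :
    0 < 1 - q ^ j := by
  have : q ^ j < 1 := pow_lt_one₀ hq0.le hq1 (by omega)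
  linarith

private lemma exp_le_one_sub {q : ℝ} (hq0 : 0 < q) (hq1 : q < 1) (x : ℝ) (hx0 : 0 ≤ x)
    (hxq : x ≤ q) : Real.exp (-(x / (1 - q))) ≤ 1 - x := by
  have h1q : 0 < 1 - q := by linarith
  have key : 1 ≤ (1 - x) * Real.exp (x / (1 - q)) := by
    have h2 : 1 + x / (1 - q) ≤ Real.exp (x / (1 - q)) := by
      linarith [Real.add_one_le_exp (x / (1 - q))]
    have h3 : (1 : ℝ) ≤ (1 - x) * (1 + x / (1 - q)) := by
      rw [div_eq_mul_inv]
      have : (1 - x) * (1 + x * (1 - q)⁻¹) - 1 = x * (q - x) * (1 - q)⁻¹ := by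
        field_simp; ring
      nlinarith [mul_nonneg (mul_nonneg hx0 (by linarith : (0:ℝ) ≤ q - x)) (inv_pos.mpr h1q).le]
    calc (1 : ℝ) ≤ (1 - x) * (1 + x / (1 - q)) := h3
      _ ≤ (1 - x) * Real.exp (x / (1 - q)) := by
          apply mul_le_mul_of_nonneg_left h2 (by nlinarith)
  rw [Real.exp_neg, inv_eq_one_div, div_le_iff₀ (Real.exp_pos _)]
  linarith [key]

/-- for the `q`-weights `w(k) = √(1-q^{k+1})`, the infinite product
`∏_{j=1}^∞ (1-q^j)` converges to a strictly positive number `P`, and the partial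
products `∏_{k=M}^N w(k)/w(k+n)` are uniformly bounded between `√P` and `1`. -/
theorem q_weights_product_bounds (q : ℝ) (hq0 : 0 < q) (hq1 : q < 1)
    (w : ℕ → ℝ) (hw : ∀ k, w k = Real.sqrt (1 - q^(k+1))) :
    ∃ P : ℝ, 0 < P ∧
      Tendsto (fun N => ∏ j ∈ Finset.Icc 1 N, (1 - q^j)) atTop (nhds P) ∧
      ∀ n : ℕ, 1 ≤ n → ∀ M N : ℕ, M ≤ N →
        Real.sqrt P ≤ ∏ k ∈ Finset.Icc M N, w k / w (k+n) ∧
        ∏ k ∈ Finset.Icc M N, w k / w (k+n) ≤ 1 := by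
  have h1q : 0 < 1 - q := by linarith
  set a : ℕ → ℝ := fun N => ∏ j ∈ Finset.Icc 1 N, (1 - q^j) with ha
  have hfac_pos : ∀ j ∈ Finset.Icc 1 (100:ℕ), True := fun _ _ => trivial
  have hpos : ∀ j : ℕ, 1 ≤ j → 0 < 1 - q ^ j := fun j hj => one_sub_pow_pos' hq0 hq1 j hj
  have hfac_le_one : ∀ j : ℕ, 1 - q ^ j ≤ 1 := fun j => by
    have : 0 ≤ q ^ j := pow_nonneg hq0.le j
    linarith
  have ha_pos : ∀ N, 0 < a N := fun N =>
    Finset.prod_pos fun j hj => hpos j (Finset.mem_Icc.mp hj).1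
  -- lower bound for a N
  have hC : ∀ N, Real.exp (-(1 / (1 - q) ^ 2)) ≤ a N := by
    intro N
    have step1 : ∀ j ∈ Finset.Icc 1 N, Real.exp (-(q ^ j / (1 - q))) ≤ 1 - q ^ j := by
      intro j hj
      have hj1 : 1 ≤ j := (Finset.mem_Icc.mp hj).1
      exact exp_le_one_sub hq0 hq1 (q ^ j) (pow_nonneg hq0.le j)
        (pow_le_of_le_one hq0.le hq1.le (by omega))
    calc Real.exp (-(1 / (1 - q) ^ 2))
        ≤ Real.exp (∑ j ∈ Finset.Icc 1 N, -(q ^ j / (1 - q))) := by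
          apply Real.exp_le_exp.mpr
          have hsum : ∑ j ∈ Finset.Icc 1 N, q ^ j ≤ 1 / (1 - q) := by
            have h1 : ∑ j ∈ Finset.Icc 1 N, q ^ j ≤ ∑ j ∈ Finset.range (N+1), q ^ j := by
              apply Finset.sum_le_sum_of_subset_of_nonneg
              · intro j hj
                simp only [Finset.mem_Icc, Finset.mem_range] at *
                omega
              · exact fun j _ _ => pow_nonneg hq0.le j
            have h2 : ∑ j ∈ Finset.range (N+1), q ^ j = (1 - q ^ (N+1)) / (1 - q) := by
              rw [geom_sum_eq hq1.ne]
              rw [div_eq_div_iff (by linarith) (by linarith)]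
              ring
            have h3 : (1 - q ^ (N+1)) / (1 - q) ≤ 1 / (1 - q) := by
              have := pow_nonneg hq0.le (N+1)
              rw [div_le_div_iff₀ h1q h1q]
              nlinarith
            linarith
          have heq : ∑ j ∈ Finset.Icc 1 N, -(q ^ j / (1 - q))
              = -((∑ j ∈ Finset.Icc 1 N, q ^ j) / (1 - q)) := by
            rw [Finset.sum_neg_distrib, Finset.sum_div]
          rw [heq, neg_le_neg_iff]
          calc (∑ j ∈ Finset.Icc 1 N, q ^ j) / (1 - q) ≤ (1 / (1 - q)) / (1 - q) := by
                gcongr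
            _ = 1 / (1 - q) ^ 2 := by rw [div_div, ← sq]
      _ = ∏ j ∈ Finset.Icc 1 N, Real.exp (-(q ^ j / (1 - q))) := Real.exp_sum _ _
      _ ≤ a N := Finset.prod_le_prod (fun j _ => (Real.exp_pos _).le) step1
  have ha_anti : Antitone a := by
    intro m n hmn
    have hsub : Finset.Icc 1 m ⊆ Finset.Icc 1 n := Finset.Icc_subset_Icc le_rfl hmn
    show (∏ j ∈ Finset.Icc 1 n, (1 - q^j)) ≤ ∏ j ∈ Finset.Icc 1 m, (1 - q^j)
    rw [← Finset.prod_sdiff hsub]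
    have hge : ∀ j ∈ Finset.Icc 1 n \ Finset.Icc 1 m, 0 < 1 - q ^ j := fun j hj =>
      hpos j (Finset.mem_Icc.mp (Finset.mem_sdiff.mp hj).1).1
    calc (∏ j ∈ Finset.Icc 1 n \ Finset.Icc 1 m, (1 - q^j)) * ∏ j ∈ Finset.Icc 1 m, (1 - q^j)
        ≤ 1 * ∏ j ∈ Finset.Icc 1 m, (1 - q^j) := by
          apply mul_le_mul_of_nonneg_right _ (ha_pos m).le
          exact Finset.prod_le_one (fun j hj => (hge j hj).le) (fun j _ => hfac_le_one j)
      _ = ∏ j ∈ Finset.Icc 1 m, (1 - q^j) := one_mul _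
  have hbdd : BddBelow (Set.range a) := ⟨Real.exp (-(1 / (1 - q) ^ 2)), by
    rintro x ⟨N, rfl⟩; exact hC N⟩
  have htendsto : Tendsto a atTop (nhds (⨅ N, a N)) := tendsto_atTop_ciInf ha_anti hbdd
  refine ⟨⨅ N, a N, ?_, htendsto, ?_⟩
  · exact lt_of_lt_of_le (Real.exp_pos _) (le_ciInf hC)
  intro n hn M N hMN
  set P := ⨅ N, a N with hP
  have hPle : ∀ N, P ≤ a N := fun N => ciInf_le hbdd N
  have hPpos : 0 < P := lt_of_lt_of_le (Real.exp_pos _) (le_ciInf hC)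
  have hw_pos : ∀ k, 0 < w k := fun k => by
    rw [hw k]; exact Real.sqrt_pos.mpr (hpos (k+1) (by omega))
  have hw_le_one : ∀ k, w k ≤ 1 := fun k => by
    rw [hw k]
    exact Real.sqrt_le_one.mpr (by linarith [hfac_le_one (k+1)])
  have hw_mono : ∀ k m : ℕ, k ≤ m → w k ≤ w m := by
    intro k m hkm
    rw [hw k, hw m]
    apply Real.sqrt_le_sqrt
    have : q ^ (m+1) ≤ q ^ (k+1) := pow_le_pow_of_le_one hq0.le hq1.le (by omega)
    linarith
  have hratio_pos : ∀ k, 0 < w k / w (k+n) := fun k => div_pos (hw_pos k) (hw_pos _)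
  have hratio_le_one : ∀ k, w k / w (k+n) ≤ 1 :=
    fun k => div_le_one_of_le₀ (hw_mono k (k+n) (by omega)) (hw_pos _).le
  constructor
  · -- lower bound
    have step1 : Real.sqrt P ≤ ∏ k ∈ Finset.range (N+1), w k := by
      have hsq : (∏ k ∈ Finset.range (N+1), w k) ^ 2 = a (N+1) := by
        rw [← Finset.prod_pow]
        have : ∀ k ∈ Finset.range (N+1), w k ^ 2 = 1 - q ^ (k+1) := by
          intro k _
          rw [hw k, Real.sq_sqrt (hpos (k+1) (by omega)).le]
        rw [Finset.prod_congr rfl this]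
        show ∏ x ∈ Finset.range (N+1), (1 - q^(x+1)) = ∏ j ∈ Finset.Icc 1 (N+1), (1-q^j)
        rw [show Finset.Icc 1 (N+1) = Finset.Ico 1 (N+2) from (Finset.Ico_add_one_right_eq_Icc 1 (N+1)).symm]
        rw [Finset.prod_Ico_eq_prod_range]
        have : N + 2 - 1 = N + 1 := by omega
        rw [this]
        exact Finset.prod_congr rfl fun x _ => by rw [add_comm 1 x]
      have hprod_nonneg : 0 ≤ ∏ k ∈ Finset.range (N+1), w k :=
        Finset.prod_nonneg fun k _ => (hw_pos k).le
      have : P ≤ (∏ k ∈ Finset.range (N+1), w k) ^ 2 := hsq ▸ hPle (N+1)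
      calc Real.sqrt P ≤ Real.sqrt ((∏ k ∈ Finset.range (N+1), w k) ^ 2) :=
            Real.sqrt_le_sqrt this
        _ = ∏ k ∈ Finset.range (N+1), w k := Real.sqrt_sq hprod_nonneg
    have step2 : (∏ k ∈ Finset.range (N+1), w k) ≤ ∏ k ∈ Finset.Icc M N, w k := by
      have hsub : Finset.Icc M N ⊆ Finset.range (N+1) := by
        intro k hk
        simp only [Finset.mem_range, Finset.mem_Icc] at *
        omega
      rw [← Finset.prod_sdiff hsub]
      calc (∏ k ∈ Finset.range (N+1) \ Finset.Icc M N, w k) * ∏ k ∈ Finset.Icc M N, w k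
          ≤ 1 * ∏ k ∈ Finset.Icc M N, w k := by
            apply mul_le_mul_of_nonneg_right _
              (Finset.prod_nonneg fun k _ => (hw_pos k).le)
            exact Finset.prod_le_one (fun k _ => (hw_pos k).le) (fun k _ => hw_le_one k)
        _ = _ := one_mul _
    have step3 : (∏ k ∈ Finset.Icc M N, w k) ≤ ∏ k ∈ Finset.Icc M N, w k / w (k+n) := by
      apply Finset.prod_le_prod (fun k _ => (hw_pos k).le)
      intro k _
      rw [le_div_iff₀ (hw_pos (k+n))]
      calc w k * w (k+n) ≤ w k * 1 := by
            apply mul_le_mul_of_nonneg_left (hw_le_one _) (hw_pos k).le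
        _ = w k := mul_one _
    linarith
  · exact Finset.prod_le_one (fun k _ => (hratio_pos k).le) (fun k _ => hratio_le_one k)
end
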